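/- arXiv:math/0110024 — 5 statements merged into one kernel-verified Lean document; each statement's English description precedes it below -/
import Mathlib

section
/- Let R be a reduced irreducible root system with positive roots R_+, root lattice Q, weight lattice P, and let θ be the highest short root (with the normalization (α,α)=2 for short roots, so θ is the maximal positive coroot viewed as a root). Then θ is the least nonzero element of Q_+ ∩ P_+ with respect to the ordering induced by Q_+: for every nonzero b ∈ Q ∩ P_+ (equivalently Q_+ ∩ P_+), the difference b − θ lies in Q_+ = ⊕ᵢ ℤ≥0 αᵢ. -/
open scoped RealInnerProductSpace Pointwise BigOperators

/-!
Write `b - θ = x - y` with `x, y ∈ Q₊` of disjoint supports; we must show `y = 0`. Simple roots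
are pairwise obtuse, so `⟪x, y⟫ ≤ 0`, and `b` is dominant, so `0 ≤ ⟪b, y⟫`; together these give
`⟪y, y⟫ ≤ ⟪θ, y⟫`. By irreducibility every root pairs nontrivially with a short root, which forces
all squared root lengths into `2ℤ`; hence `Q` is an even lattice and `2 ≤ ⟪y, y⟫` if `y ≠ 0`. Since
`⟪θ, θ⟫ = 2`, this squeezes `y = θ`. But maximality makes `θ` dominant, and a dominant root of an
irreducible system has full support (the Dynkin diagram is connected), so `y = θ` forces `b = 0`.
-/

open Finset

variable {E : Type*} [NormedAddCommGroup E] [InnerProductSpace ℝ E] {ι : Type*} [Fintype ι]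

theorem inner_sum_smul_sum_smul (a b : ι → ℝ) (v : ι → E) :
    ⟪∑ i, a i • v i, ∑ j, b j • v j⟫ = ∑ i, ∑ j, a i * b j * ⟪v i, v j⟫ := by
  rw [sum_inner]
  refine sum_congr rfl fun i _ => ?_
  rw [real_inner_smul_left, inner_sum, mul_sum]
  refine sum_congr rfl fun j _ => ?_
  rw [real_inner_smul_right]
  ring

theorem inner_self_sub_smul_of_two_mul_inner_eq {α β : E} {m : ℝ}
    (h : 2 * ⟪β, α⟫ = m * ⟪α, α⟫) : ⟪β - m • α, β - m • α⟫ = ⟪β, β⟫ := by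
  simp only [real_inner_sub_sub_self, real_inner_smul_left, real_inner_smul_right]
  linear_combination (-m) * h

theorem eq_of_inner_self_le_inner {u y : E} (hu : ⟪u, u⟫ ≤ ⟪u, y⟫) (hy : ⟪y, y⟫ ≤ ⟪u, y⟫) :
    u = y := by
  have : ⟪u - y, u - y⟫ ≤ 0 := by rw [real_inner_sub_sub_self]; linarith
  exact sub_eq_zero.mp (real_inner_self_nonpos.mp this)

theorem inner_sum_smul_nonneg {b : E} {v : ι → E} (hb : ∀ i, 0 ≤ ⟪b, v i⟫) {m : ι → ℝ}
    (hm : ∀ i, 0 ≤ m i) : 0 ≤ ⟪b, ∑ i, m i • v i⟫ := by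
  rw [inner_sum]
  exact sum_nonneg fun i _ => by rw [real_inner_smul_right]; exact mul_nonneg (hm i) (hb i)

theorem inner_sum_nonpos_of_disjoint {v : ι → E} (hv : ∀ i j, i ≠ j → ⟪v i, v j⟫ ≤ 0)
    {p m : ι → ℝ} (hp : ∀ i, 0 ≤ p i) (hm : ∀ i, 0 ≤ m i) (hpm : ∀ i, p i = 0 ∨ m i = 0) :
    ⟪∑ i, p i • v i, ∑ j, m j • v j⟫ ≤ 0 := by
  rw [inner_sum_smul_sum_smul]
  refine sum_nonpos fun i _ => sum_nonpos fun j _ => ?_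
  rcases eq_or_ne i j with rfl | hij
  · rcases hpm i with h | h <;> simp [h]
  · exact mul_nonpos_of_nonneg_of_nonpos (mul_nonneg (hp i) (hm j)) (hv i j hij)

theorem exists_inner_pos_of_eq_sum_smul {v : ι → E} {α : E} (hα : α ≠ 0) {c : ι → ℝ}
    (hc : ∀ i, 0 ≤ c i) (hαc : α = ∑ i, c i • v i) : ∃ i, 0 < ⟪α, v i⟫ := by
  by_contra! h
  have : ⟪α, α⟫ ≤ 0 := by
    nth_rewrite 1 [hαc]
    rw [sum_inner]
    exact sum_nonpos fun i _ => by
      rw [real_inner_smul_left, real_inner_comm]; exact mul_nonpos_of_nonneg_of_nonpos (hc i) (h i)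
  exact hα (real_inner_self_nonpos.mp this)

theorem inner_eq_zero_of_coeff_eq_zero {v : ι → E} (hv : ∀ i j, i ≠ j → ⟪v i, v j⟫ ≤ 0)
    {t : ι → ℝ} (ht : ∀ i, 0 ≤ t i) {j : ι} (hj : t j = 0) (hdom : 0 ≤ ⟪∑ k, t k • v k, v j⟫)
    {i : ι} (hi : 0 < t i) : ⟪v i, v j⟫ = 0 := by
  have hterm : ∀ k ∈ univ, t k * ⟪v k, v j⟫ ≤ 0 := fun k _ => by
    rcases eq_or_ne k j with rfl | hkj
    · simp [hj]
    · exact mul_nonpos_of_nonneg_of_nonpos (ht k) (hv k j hkj)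
  have hsum : ∑ k, t k * ⟪v k, v j⟫ = 0 := by
    refine le_antisymm (sum_nonpos hterm) ?_
    simpa [sum_inner, real_inner_smul_left] using hdom
  exact (mul_eq_zero.mp ((sum_eq_zero_iff_of_nonpos hterm).mp hsum i (mem_univ i))).resolve_left
    hi.ne'

theorem sum_smul_mem_span_image {K : Set ι} {c : ι → ℝ} (hc : ∀ i ∉ K, c i = 0) (v : ι → E) :
    ∑ i, c i • v i ∈ Submodule.span ℝ (v '' K) := by
  refine Submodule.sum_mem _ fun i _ => ?_
  by_cases hi : i ∈ K
  · exact Submodule.smul_mem _ _ (Submodule.subset_span ⟨i, hi, rfl⟩)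
  · simp [hc i hi]

theorem sum_natCast_smul_mem_closure {S : Set E} {v : ι → E} (hv : ∀ i, v i ∈ S) (m : ι → ℕ) :
    ∑ i, (m i : ℝ) • v i ∈ AddSubgroup.closure S :=
  AddSubgroup.sum_mem _ fun i _ => by
    rw [Nat.cast_smul_eq_nsmul]
    exact AddSubgroup.nsmul_mem _ (AddSubgroup.subset_closure (hv i)) _

theorem sum_natCast_smul_sub_sum_natCast_smul (c t : ι → ℕ) (v : ι → E) :
    ∑ i, (c i : ℝ) • v i - ∑ i, (t i : ℝ) • v i =
      ∑ i, ((c i - t i : ℕ) : ℝ) • v i - ∑ i, ((t i - c i : ℕ) : ℝ) • v i := by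
  simp only [← sum_sub_distrib, ← sub_smul]
  refine sum_congr rfl fun i _ => ?_
  rcases le_total (c i) (t i) with h | h <;> simp [Nat.sub_eq_zero_of_le h, Nat.cast_sub h]

open AddSubgroup in
theorem inner_mem_zmultiples_of_mem_closure {S : Set E} {a : ℝ}
    (hS : ∀ s ∈ S, ∀ t ∈ S, ⟪s, t⟫ ∈ zmultiples a) {v w : E}
    (hv : v ∈ AddSubgroup.closure S) (hw : w ∈ AddSubgroup.closure S) : ⟪v, w⟫ ∈ zmultiples a := by
  induction hv using closure_induction with
  | mem v hv =>
    induction hw using closure_induction with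
    | mem w hw => exact hS v hv w hw
    | zero => simp
    | add w w' _ _ h h' => rw [inner_add_right]; exact add_mem h h'
    | neg w _ h => rw [inner_neg_right]; exact neg_mem h
  | zero => simp
  | add v v' _ _ h h' => rw [inner_add_left]; exact add_mem h h'
  | neg v _ h => rw [inner_neg_left]; exact neg_mem h

open AddSubgroup in
theorem inner_self_mem_zmultiples_two_of_mem_closure {S : Set E}
    (hS : ∀ s ∈ S, ∀ t ∈ S, ⟪s, t⟫ ∈ zmultiples (1 : ℝ))
    (hS2 : ∀ s ∈ S, ⟪s, s⟫ ∈ zmultiples (2 : ℝ)) {v : E} (hv : v ∈ AddSubgroup.closure S) :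
    ⟪v, v⟫ ∈ zmultiples (2 : ℝ) := by
  induction hv using closure_induction with
  | mem v hv => exact hS2 v hv
  | zero => simp
  | add v w hv hw h h' =>
    obtain ⟨k, hk⟩ := mem_zmultiples_iff.mp (inner_mem_zmultiples_of_mem_closure hS hv hw)
    rw [real_inner_add_add_self]
    refine add_mem (add_mem h ⟨k, ?_⟩) h'
    rw [← hk]; simp [mul_comm]
  | neg v _ h => rwa [inner_neg_neg]

theorem le_of_mem_zmultiples_of_pos {a x : ℝ} (ha : 0 < a) (hx : x ∈ AddSubgroup.zmultiples a)
    (hx0 : 0 < x) : a ≤ x := by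
  obtain ⟨k, rfl⟩ := AddSubgroup.mem_zmultiples_iff.mp hx
  rw [zsmul_eq_mul] at hx0 ⊢
  have : (0 : ℝ) < k := pos_of_mul_pos_left hx0 ha.le
  have : (1 : ℝ) ≤ k := by exact_mod_cast (Int.cast_pos.mp this : 0 < k)
  nlinarith

section RootSystem

variable {R Rplus : Set E} {simple : ι → E}

theorem exists_int_two_mul_inner_eq_and_sub_smul_mem
    (hrefl : ∀ α ∈ R, ∀ β ∈ R, β - (2 * ⟪β, α⟫ / ⟪α, α⟫) • α ∈ R)
    (hcart : ∀ α ∈ R, ∀ β ∈ R, ∃ m : ℤ, 2 * ⟪β, α⟫ / ⟪α, α⟫ = m)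
    (h0 : (0 : E) ∉ R) {α β : E} (hα : α ∈ R) (hβ : β ∈ R) :
    ∃ m : ℤ, 2 * ⟪β, α⟫ = m * ⟪α, α⟫ ∧ β - (m : ℝ) • α ∈ R := by
  obtain ⟨m, hm⟩ := hcart α hα β hβ
  have hαα : ⟪α, α⟫ ≠ 0 := real_inner_self_pos.mpr (ne_of_mem_of_not_mem hα h0) |>.ne'
  refine ⟨m, ?_, hm ▸ hrefl α hα β hβ⟩
  rw [← hm, div_mul_cancel₀ _ hαα]

theorem coeff_nonneg_of_mem_pos (hindep : LinearIndependent ℝ simple)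
    (hpos_sum : ∀ α ∈ Rplus, ∃ c : ι → ℕ, α = ∑ i, (c i : ℝ) • simple i)
    {β : E} (hβ : β ∈ Rplus) {a : ι → ℝ} (ha : β = ∑ i, a i • simple i) (i : ι) : 0 ≤ a i := by
  obtain ⟨c, hc⟩ := hpos_sum β hβ
  rw [Fintype.linearIndependent_iffₛ.mp hindep a _ (ha.symm.trans hc) i]
  positivity

theorem mem_pos_of_coeff_pos (hR : R = Rplus ∪ -Rplus) (hindep : LinearIndependent ℝ simple)
    (hpos_sum : ∀ α ∈ Rplus, ∃ c : ι → ℕ, α = ∑ i, (c i : ℝ) • simple i)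
    {β : E} (hβ : β ∈ R) {a : ι → ℝ} (ha : β = ∑ i, a i • simple i) {k : ι} (hk : 0 < a k) :
    β ∈ Rplus := by
  rw [hR] at hβ
  refine hβ.resolve_right fun hneg => ?_
  have := coeff_nonneg_of_mem_pos hindep hpos_sum (Set.mem_neg.mp hneg) (a := -a)
    (by simp [ha, sum_neg_distrib]) k
  simp only [Pi.neg_apply, neg_nonneg] at this
  linarith

theorem inner_simple_nonpos (hR : R = Rplus ∪ -Rplus)
    (hrefl : ∀ α ∈ R, ∀ β ∈ R, β - (2 * ⟪β, α⟫ / ⟪α, α⟫) • α ∈ R)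
    (hcart : ∀ α ∈ R, ∀ β ∈ R, ∃ m : ℤ, 2 * ⟪β, α⟫ / ⟪α, α⟫ = m)
    (h0 : (0 : E) ∉ R) (hsimple : ∀ i, simple i ∈ Rplus) (hindep : LinearIndependent ℝ simple)
    (hpos_sum : ∀ α ∈ Rplus, ∃ c : ι → ℕ, α = ∑ i, (c i : ℝ) • simple i)
    {i j : ι} (hij : i ≠ j) : ⟪simple i, simple j⟫ ≤ 0 := by
  classical
  by_contra! hpos
  have hRplus : Rplus ⊆ R := hR ▸ Set.subset_union_left
  obtain ⟨m, hm, hmem⟩ := exists_int_two_mul_inner_eq_and_sub_smul_mem hrefl hcart h0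
    (hRplus (hsimple j)) (hRplus (hsimple i))
  have hjj : 0 < ⟪simple j, simple j⟫ := real_inner_self_pos.mpr (hindep.ne_zero j)
  have hm0 : (0 : ℝ) < m := pos_of_mul_pos_left (by linarith) hjj.le
  set a : ι → ℝ := Pi.single i 1 - Pi.single j (m : ℝ)
  have ha : simple i - (m : ℝ) • simple j = ∑ k, a k • simple k := by
    simp [a, sub_smul, sum_sub_distrib]
  have hpos' := coeff_nonneg_of_mem_pos hindep hpos_sum
    (mem_pos_of_coeff_pos hR hindep hpos_sum hmem ha (k := i) (by simp [a, hij])) ha j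
  simp only [a, Pi.sub_apply, Pi.single_eq_of_ne hij.symm, Pi.single_eq_same, zero_sub,
    neg_nonneg] at hpos'
  linarith

theorem inner_simple_nonneg_of_maximal (hR : R = Rplus ∪ -Rplus)
    (hrefl : ∀ α ∈ R, ∀ β ∈ R, β - (2 * ⟪β, α⟫ / ⟪α, α⟫) • α ∈ R)
    (hcart : ∀ α ∈ R, ∀ β ∈ R, ∃ m : ℤ, 2 * ⟪β, α⟫ / ⟪α, α⟫ = m)
    (h0 : (0 : E) ∉ R) (hsimple : ∀ i, simple i ∈ Rplus) (hindep : LinearIndependent ℝ simple)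
    (hpos_sum : ∀ α ∈ Rplus, ∃ c : ι → ℕ, α = ∑ i, (c i : ℝ) • simple i)
    {θ : E} (hθ : θ ∈ Rplus)
    (hθmax : ∀ α ∈ Rplus, ⟪α, α⟫ = ⟪θ, θ⟫ → ∃ c : ι → ℕ, θ - α = ∑ i, (c i : ℝ) • simple i)
    (j : ι) : 0 ≤ ⟪θ, simple j⟫ := by
  classical
  by_contra! hneg
  have hRplus : Rplus ⊆ R := hR ▸ Set.subset_union_left
  obtain ⟨m, hm, hmem⟩ := exists_int_two_mul_inner_eq_and_sub_smul_mem hrefl hcart h0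
    (hRplus (hsimple j)) (hRplus hθ)
  have hjj : 0 < ⟪simple j, simple j⟫ := real_inner_self_pos.mpr (hindep.ne_zero j)
  have hm0 : (m : ℝ) < 0 := neg_of_mul_neg_left (by linarith) hjj.le
  obtain ⟨t, ht⟩ := hpos_sum θ hθ
  set a : ι → ℝ := (fun i => (t i : ℝ)) - Pi.single j (m : ℝ)
  have ha : θ - (m : ℝ) • simple j = ∑ k, a k • simple k := by
    simp [a, ht, sub_smul, sum_sub_distrib]
  have hpos : θ - (m : ℝ) • simple j ∈ Rplus :=
    mem_pos_of_coeff_pos hR hindep hpos_sum hmem ha (k := j) (by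
      simp only [a, Pi.sub_apply, Pi.single_eq_same]
      linarith [(t j).cast_nonneg (α := ℝ)])
  obtain ⟨d, hd⟩ := hθmax _ hpos (inner_self_sub_smul_of_two_mul_inner_eq hm)
  have hmd := Fintype.linearIndependent_iffₛ.mp hindep (Pi.single j (m : ℝ)) (fun i => d i)
    (by rw [← hd]; simp) j
  simp only [Pi.single_eq_same] at hmd
  linarith [(d j).cast_nonneg (α := ℝ)]

theorem exists_lower_pos_root_of_inner_simple_pos (hR : R = Rplus ∪ -Rplus)
    (hrefl : ∀ α ∈ R, ∀ β ∈ R, β - (2 * ⟪β, α⟫ / ⟪α, α⟫) • α ∈ R)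
    (hcart : ∀ α ∈ R, ∀ β ∈ R, ∃ m : ℤ, 2 * ⟪β, α⟫ / ⟪α, α⟫ = m)
    (h0 : (0 : E) ∉ R) (hsimple : ∀ i, simple i ∈ Rplus) (hindep : LinearIndependent ℝ simple)
    (hpos_sum : ∀ α ∈ Rplus, ∃ c : ι → ℕ, α = ∑ i, (c i : ℝ) • simple i)
    {α : E} (hα : α ∈ Rplus) {c : ι → ℕ} (hc : α = ∑ i, (c i : ℝ) • simple i)
    {i w : ι} (hi : 0 < ⟪α, simple i⟫) (hwi : w ≠ i) (hw : 0 < c w) :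
    ∃ m : ℤ, 2 * ⟪α, simple i⟫ = m * ⟪simple i, simple i⟫ ∧
      ∃ c' : ι → ℕ, α - (m : ℝ) • simple i = ∑ k, (c' k : ℝ) • simple k ∧
        α - (m : ℝ) • simple i ∈ Rplus ∧ ∑ k, c' k < ∑ k, c k ∧ c' w = c w := by
  classical
  have hRplus : Rplus ⊆ R := hR ▸ Set.subset_union_left
  obtain ⟨m, hm, hmem⟩ := exists_int_two_mul_inner_eq_and_sub_smul_mem hrefl hcart h0
    (hRplus (hsimple i)) (hRplus hα)
  have hii : 0 < ⟪simple i, simple i⟫ := real_inner_self_pos.mpr (hindep.ne_zero i)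
  have hm0 : (0 : ℝ) < m := pos_of_mul_pos_left (by linarith) hii.le
  set a : ι → ℝ := (fun k => (c k : ℝ)) - Pi.single i (m : ℝ)
  have ha : α - (m : ℝ) • simple i = ∑ k, a k • simple k := by
    simp [a, hc, sub_smul, sum_sub_distrib]
  have haw : a w = c w := by simp [a, hwi]
  have hpos := mem_pos_of_coeff_pos hR hindep hpos_sum hmem ha (k := w)
    (by rw [haw]; exact_mod_cast hw)
  obtain ⟨c', hc'⟩ := hpos_sum _ hpos
  have hcoef : ∀ k, (c' k : ℝ) = a k :=
    Fintype.linearIndependent_iffₛ.mp hindep _ _ (hc'.symm.trans ha)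
  refine ⟨m, hm, c', hc', hpos, ?_, by exact_mod_cast (hcoef w).trans haw⟩
  have hsum : (∑ k, c' k : ℝ) = ∑ k, (c k : ℝ) - m := by
    simp [hcoef, a, sum_sub_distrib]
  exact_mod_cast (by linarith : (∑ k, c' k : ℝ) < ∑ k, (c k : ℝ))

theorem mem_iff_mem_of_coeff_pos (hR : R = Rplus ∪ -Rplus)
    (hrefl : ∀ α ∈ R, ∀ β ∈ R, β - (2 * ⟪β, α⟫ / ⟪α, α⟫) • α ∈ R)
    (hcart : ∀ α ∈ R, ∀ β ∈ R, ∃ m : ℤ, 2 * ⟪β, α⟫ / ⟪α, α⟫ = m)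
    (h0 : (0 : E) ∉ R) (hsimple : ∀ i, simple i ∈ Rplus) (hindep : LinearIndependent ℝ simple)
    (hpos_sum : ∀ α ∈ Rplus, ∃ c : ι → ℕ, α = ∑ i, (c i : ℝ) • simple i)
    {K : Set ι} (hK : ∀ i ∈ K, ∀ j ∉ K, ⟪simple i, simple j⟫ = 0)
    {α : E} (hα : α ∈ Rplus) {c : ι → ℕ} (hc : α = ∑ i, (c i : ℝ) • simple i)
    {k l : ι} (hk : 0 < c k) (hl : 0 < c l) : k ∈ K ↔ l ∈ K := by
  have hK' : ∀ k l, ¬(k ∈ K ↔ l ∈ K) → ⟪simple k, simple l⟫ = 0 := by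
    intro k l hkl
    by_cases hk : k ∈ K
    · exact hK k hk l fun hl => hkl (iff_of_true hk hl)
    · rw [real_inner_comm]
      exact hK l (by tauto) k hk
  induction hN : ∑ i, c i using Nat.strong_induction_on generalizing α c k l with
  | _ N ih =>
  by_contra hkl
  have hRplus : Rplus ⊆ R := hR ▸ Set.subset_union_left
  obtain ⟨i, hi⟩ := exists_inner_pos_of_eq_sum_smul (ne_of_mem_of_not_mem (hRplus hα) h0)
    (fun i => (c i).cast_nonneg) hc
  obtain ⟨w, hw, hwi⟩ : ∃ w, 0 < c w ∧ ¬(w ∈ K ↔ i ∈ K) := by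
    by_cases h : k ∈ K ↔ i ∈ K
    · exact ⟨l, hl, by tauto⟩
    · exact ⟨k, hk, h⟩
  obtain ⟨m, hm, c', hc', hpos, hlt, hw'⟩ := exists_lower_pos_root_of_inner_simple_pos hR hrefl
    hcart h0 hsimple hindep hpos_sum hα hc hi (by rintro rfl; exact hwi Iff.rfl) hw
  -- By induction the lower root lies on the side of `w`, away from `i`; but then reflecting `α`
  -- in `αᵢ` would subtract `2m αᵢ` instead of `m αᵢ`.
  have horth : ⟪α - (m : ℝ) • simple i, simple i⟫ = 0 := by
    rw [hc', sum_inner]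
    refine sum_eq_zero fun j _ => ?_
    rcases (c' j).eq_zero_or_pos with h | h
    · simp [h]
    · have hjw := ih _ (hN ▸ hlt) hpos hc' h (hw'.symm ▸ hw) rfl
      rw [real_inner_smul_left, hK' j i (by tauto), mul_zero]
  rw [inner_sub_left, real_inner_smul_left] at horth
  linarith

theorem mem_span_image_or_mem_span_image_compl (hR : R = Rplus ∪ -Rplus)
    (hrefl : ∀ α ∈ R, ∀ β ∈ R, β - (2 * ⟪β, α⟫ / ⟪α, α⟫) • α ∈ R)
    (hcart : ∀ α ∈ R, ∀ β ∈ R, ∃ m : ℤ, 2 * ⟪β, α⟫ / ⟪α, α⟫ = m)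
    (h0 : (0 : E) ∉ R) (hsimple : ∀ i, simple i ∈ Rplus) (hindep : LinearIndependent ℝ simple)
    (hpos_sum : ∀ α ∈ Rplus, ∃ c : ι → ℕ, α = ∑ i, (c i : ℝ) • simple i)
    {K : Set ι} (hK : ∀ i ∈ K, ∀ j ∉ K, ⟪simple i, simple j⟫ = 0) {β : E} (hβ : β ∈ R) :
    β ∈ Submodule.span ℝ (simple '' K) ∨ β ∈ Submodule.span ℝ (simple '' Kᶜ) := by
  have hpos : ∀ α ∈ Rplus,
      α ∈ Submodule.span ℝ (simple '' K) ∨ α ∈ Submodule.span ℝ (simple '' Kᶜ) := by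
    intro α hα
    obtain ⟨c, hc⟩ := hpos_sum α hα
    have hside := fun {k l} => mem_iff_mem_of_coeff_pos hR hrefl hcart h0 hsimple hindep
      hpos_sum hK hα hc (k := k) (l := l)
    rw [hc]
    by_cases hk : ∃ k ∈ K, 0 < c k
    · obtain ⟨k, hkK, hk⟩ := hk
      refine .inl (sum_smul_mem_span_image (fun l hl => ?_) simple)
      by_contra hl0
      exact hl ((hside hk (Nat.pos_of_ne_zero (by exact_mod_cast hl0))).mp hkK)
    · push Not at hk
      refine .inr (sum_smul_mem_span_image (fun l hl => ?_) simple)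
      simpa using hk l (not_not.mp hl)
  rw [hR] at hβ
  rcases hβ with hβ | hβ
  · exact hpos β hβ
  · simpa [Submodule.neg_mem_iff] using hpos (-β) hβ

theorem eq_empty_or_eq_univ_of_inner_simple_eq_zero (hR : R = Rplus ∪ -Rplus)
    (hrefl : ∀ α ∈ R, ∀ β ∈ R, β - (2 * ⟪β, α⟫ / ⟪α, α⟫) • α ∈ R)
    (hcart : ∀ α ∈ R, ∀ β ∈ R, ∃ m : ℤ, 2 * ⟪β, α⟫ / ⟪α, α⟫ = m)
    (h0 : (0 : E) ∉ R) (hsimple : ∀ i, simple i ∈ Rplus) (hindep : LinearIndependent ℝ simple)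
    (hpos_sum : ∀ α ∈ Rplus, ∃ c : ι → ℕ, α = ∑ i, (c i : ℝ) • simple i)
    (hirr : ∀ S T : Set E, S ∪ T = R → (∀ a ∈ S, ∀ b ∈ T, ⟪a, b⟫ = 0) → S = ∅ ∨ T = ∅)
    {K : Set ι} (hK : ∀ i ∈ K, ∀ j ∉ K, ⟪simple i, simple j⟫ = 0) : K = ∅ ∨ K = Set.univ := by
  set V := Submodule.span ℝ (simple '' K)
  have hRplus : Rplus ⊆ R := hR ▸ Set.subset_union_left
  have horth : ∀ a ∈ {β ∈ R | β ∈ V}, ∀ b ∈ {β ∈ R | β ∉ V}, ⟪a, b⟫ = 0 := by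
    rintro a ⟨-, ha⟩ b ⟨hb, hbV⟩
    refine (Submodule.isOrtho_span.mpr ?_).inner_eq ha
      ((mem_span_image_or_mem_span_image_compl hR hrefl hcart h0 hsimple hindep hpos_sum hK
        hb).resolve_left hbV)
    rintro _ ⟨i, hi, rfl⟩ _ ⟨j, hj, rfl⟩
    exact hK i hi j hj
  rcases hirr _ _ (by ext; simp only [Set.mem_union, Set.mem_sep_iff]; tauto) horth with h | h
  · refine .inl (Set.eq_empty_of_forall_notMem fun i hi => ?_)
    exact (Set.eq_empty_iff_forall_notMem.mp h) (simple i)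
      ⟨hRplus (hsimple i), Submodule.subset_span ⟨i, hi, rfl⟩⟩
  · refine .inr (Set.eq_univ_of_forall fun j => by_contra fun hj => ?_)
    exact (Set.eq_empty_iff_forall_notMem.mp h) (simple j)
      ⟨hRplus (hsimple j), hindep.notMem_span_image hj⟩

theorem coeff_pos_of_maximal (hR : R = Rplus ∪ -Rplus)
    (hrefl : ∀ α ∈ R, ∀ β ∈ R, β - (2 * ⟪β, α⟫ / ⟪α, α⟫) • α ∈ R)
    (hcart : ∀ α ∈ R, ∀ β ∈ R, ∃ m : ℤ, 2 * ⟪β, α⟫ / ⟪α, α⟫ = m)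
    (h0 : (0 : E) ∉ R) (hsimple : ∀ i, simple i ∈ Rplus) (hindep : LinearIndependent ℝ simple)
    (hpos_sum : ∀ α ∈ Rplus, ∃ c : ι → ℕ, α = ∑ i, (c i : ℝ) • simple i)
    (hirr : ∀ S T : Set E, S ∪ T = R → (∀ a ∈ S, ∀ b ∈ T, ⟪a, b⟫ = 0) → S = ∅ ∨ T = ∅)
    {θ : E} (hθ : θ ∈ Rplus)
    (hθmax : ∀ α ∈ Rplus, ⟪α, α⟫ = ⟪θ, θ⟫ → ∃ c : ι → ℕ, θ - α = ∑ i, (c i : ℝ) • simple i)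
    {t : ι → ℕ} (ht : θ = ∑ i, (t i : ℝ) • simple i) (i : ι) : 0 < t i := by
  have hdom := inner_simple_nonneg_of_maximal hR hrefl hcart h0 hsimple hindep hpos_sum
    hθ hθmax
  have hK : ∀ i ∈ {i | 0 < t i}, ∀ j ∉ {i | 0 < t i}, ⟪simple i, simple j⟫ = 0 :=
    fun i hi j hj => inner_eq_zero_of_coeff_eq_zero
      (fun _ _ => inner_simple_nonpos hR hrefl hcart h0 hsimple hindep hpos_sum)
      (fun k => (t k).cast_nonneg) (by simpa using hj) (ht ▸ hdom j) (by exact_mod_cast hi)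
  rcases eq_empty_or_eq_univ_of_inner_simple_eq_zero hR hrefl hcart h0 hsimple hindep hpos_sum
    hirr hK with h | h
  · have hθ0 : θ = 0 := by
      rw [ht]
      exact sum_eq_zero fun k _ => by
        simp [Nat.eq_zero_of_not_pos (Set.eq_empty_iff_forall_notMem.mp h k)]
    exact absurd (hR ▸ Set.mem_union_left _ hθ) (hθ0 ▸ h0)
  · exact (h ▸ Set.mem_univ i : i ∈ {i | 0 < t i})

theorem exists_inner_ne_zero_of_inner_self_eq
    (hrefl : ∀ α ∈ R, ∀ β ∈ R, β - (2 * ⟪β, α⟫ / ⟪α, α⟫) • α ∈ R)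
    (hcart : ∀ α ∈ R, ∀ β ∈ R, ∃ m : ℤ, 2 * ⟪β, α⟫ / ⟪α, α⟫ = m) (h0 : (0 : E) ∉ R)
    (hirr : ∀ S T : Set E, S ∪ T = R → (∀ a ∈ S, ∀ b ∈ T, ⟪a, b⟫ = 0) → S = ∅ ∨ T = ∅)
    {θ : E} (hθ : θ ∈ R) {δ : E} (hδ : δ ∈ R) : ∃ γ ∈ R, ⟪γ, γ⟫ = ⟪θ, θ⟫ ∧ ⟪δ, γ⟫ ≠ 0 := by
  set U := Submodule.span ℝ {γ | γ ∈ R ∧ ⟪γ, γ⟫ = ⟪θ, θ⟫}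
  have hperp : ∀ δ : E, (∀ γ ∈ R, ⟪γ, γ⟫ = ⟪θ, θ⟫ → ⟪δ, γ⟫ = 0) → ∀ u ∈ U, ⟪δ, u⟫ = 0 :=
    fun δ h u hu => Submodule.mem_orthogonal_singleton_iff_inner_right.mp <|
      Submodule.span_le.mpr (fun γ hγ =>
        Submodule.mem_orthogonal_singleton_iff_inner_right.mpr (h γ hγ.1 hγ.2)) hu
  -- If `δ` pairs nontrivially with `γ`, the reflection of `γ` in `δ` puts `δ` into `U`.
  have hout : ∀ δ ∈ R, δ ∉ U → ∀ γ ∈ R, ⟪γ, γ⟫ = ⟪θ, θ⟫ → ⟪δ, γ⟫ = 0 := by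
    intro δ hδ hδU γ hγ hγθ
    by_contra hne
    obtain ⟨m, hm, hmem⟩ := exists_int_two_mul_inner_eq_and_sub_smul_mem hrefl hcart h0 hδ hγ
    have hm0 : (m : ℝ) ≠ 0 := by
      rintro h
      rw [h, zero_mul, real_inner_comm] at hm
      exact hne (by linarith)
    have hγU : γ ∈ U := Submodule.subset_span ⟨hγ, hγθ⟩
    have hrU : γ - (m : ℝ) • δ ∈ U :=
      Submodule.subset_span ⟨hmem, (inner_self_sub_smul_of_two_mul_inner_eq hm).trans hγθ⟩
    exact hδU ((U.smul_mem_iff hm0).mp (by simpa using U.sub_mem hγU hrU))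
  have hall : ∀ δ ∈ R, δ ∈ U := by
    rcases hirr {β ∈ R | β ∈ U} {β ∈ R | β ∉ U}
        (by ext; simp only [Set.mem_union, Set.mem_sep_iff]; tauto)
        (fun a ha b hb => by
          rw [real_inner_comm]; exact hperp b (hout b hb.1 hb.2) a ha.2) with h | h
    · exact absurd h (Set.nonempty_iff_ne_empty.mp ⟨θ, hθ, Submodule.subset_span ⟨hθ, rfl⟩⟩)
    · exact fun δ hδ => by_contra fun hδU => (Set.eq_empty_iff_forall_notMem.mp h) δ ⟨hδ, hδU⟩
  by_contra! h
  exact ne_of_mem_of_not_mem hδ h0 (inner_self_eq_zero.mp (hperp δ h δ (hall δ hδ)))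

theorem inner_self_mem_zmultiples_two_of_inner_ne_zero
    (hcart : ∀ α ∈ R, ∀ β ∈ R, ∃ m : ℤ, 2 * ⟪β, α⟫ / ⟪α, α⟫ = m)
    {γ δ : E} (hγ : γ ∈ R) (hδ : δ ∈ R) (hγ2 : ⟪γ, γ⟫ = 2) (hδ2 : 2 ≤ ⟪δ, δ⟫)
    (hne : ⟪δ, γ⟫ ≠ 0) : ⟪δ, δ⟫ ∈ AddSubgroup.zmultiples (2 : ℝ) := by
  obtain ⟨p, hp⟩ := hcart γ hγ δ hδ
  obtain ⟨q, hq⟩ := hcart δ hδ γ hγ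
  have hp' : ⟪δ, γ⟫ = p := by rw [hγ2] at hp; linarith
  have hq' : 2 * (p : ℝ) = q * ⟪δ, δ⟫ := by
    rw [real_inner_comm, hp', div_eq_iff (by linarith)] at hq; exact hq
  have hcs : (p : ℝ) * p ≤ ⟪δ, δ⟫ * 2 := by
    have := real_inner_mul_inner_self_le δ γ
    rwa [hp', hγ2] at this
  have hq0 : q ≠ 0 := by
    rintro rfl
    exact hne (by rw [hp']; exact_mod_cast (by simpa using hq' : (p : ℝ) = 0))
  -- Cauchy–Schwarz and `2 ≤ ⟪δ, δ⟫` give `q² ≤ pq ≤ 4`, hence `q ∣ p`.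
  have hpq : p * q ≤ 4 := by
    have h : (p * q : ℝ) * ⟪δ, δ⟫ = 2 * (p * p) := by linear_combination (-(p : ℝ)) * hq'
    by_contra! h4
    have := mul_pos (sub_pos.mpr (by exact_mod_cast h4 : (4 : ℝ) < p * q))
      (by linarith : (0 : ℝ) < ⟪δ, δ⟫)
    linarith
  have hqq : q * q ≤ p * q := by
    have h : (q * q : ℝ) * ⟪δ, δ⟫ = 2 * (p * q) := by linear_combination (-(q : ℝ)) * hq'
    have := mul_nonneg (mul_self_nonneg (q : ℝ)) (sub_nonneg.mpr hδ2)
    exact_mod_cast (by linarith : (q * q : ℝ) ≤ p * q)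
  obtain ⟨k, rfl⟩ : q ∣ p := by
    have : -2 ≤ q ∧ q ≤ 2 := by constructor <;> nlinarith
    obtain ⟨h1, h2⟩ := this
    rw [← Int.dvd_natAbs]
    interval_cases q <;> simp <;> omega
  refine AddSubgroup.mem_zmultiples_iff.mpr ⟨k, ?_⟩
  push_cast at hq'
  rw [zsmul_eq_mul]
  exact mul_left_cancel₀ (by exact_mod_cast hq0 : (q : ℝ) ≠ 0) (by linarith)

theorem inner_self_mem_zmultiples_two
    (hrefl : ∀ α ∈ R, ∀ β ∈ R, β - (2 * ⟪β, α⟫ / ⟪α, α⟫) • α ∈ R)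
    (hcart : ∀ α ∈ R, ∀ β ∈ R, ∃ m : ℤ, 2 * ⟪β, α⟫ / ⟪α, α⟫ = m) (h0 : (0 : E) ∉ R)
    (hirr : ∀ S T : Set E, S ∪ T = R → (∀ a ∈ S, ∀ b ∈ T, ⟪a, b⟫ = 0) → S = ∅ ∨ T = ∅)
    (hshort : ∀ α ∈ R, 2 ≤ ⟪α, α⟫) {θ : E} (hθ : θ ∈ R) (hθ2 : ⟪θ, θ⟫ = 2)
    {δ : E} (hδ : δ ∈ R) : ⟪δ, δ⟫ ∈ AddSubgroup.zmultiples (2 : ℝ) := by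
  obtain ⟨γ, hγ, hγθ, hne⟩ := exists_inner_ne_zero_of_inner_self_eq hrefl hcart h0 hirr hθ hδ
  exact inner_self_mem_zmultiples_two_of_inner_ne_zero hcart hγ hδ (hγθ.trans hθ2) (hshort δ hδ) hne

theorem inner_mem_zmultiples_one
    (hcart : ∀ α ∈ R, ∀ β ∈ R, ∃ m : ℤ, 2 * ⟪β, α⟫ / ⟪α, α⟫ = m) (h0 : (0 : E) ∉ R)
    (heven : ∀ α ∈ R, ⟪α, α⟫ ∈ AddSubgroup.zmultiples (2 : ℝ)) {α β : E} (hα : α ∈ R)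
    (hβ : β ∈ R) : ⟪β, α⟫ ∈ AddSubgroup.zmultiples (1 : ℝ) := by
  obtain ⟨m, hm⟩ := hcart α hα β hβ
  obtain ⟨k, hk⟩ := AddSubgroup.mem_zmultiples_iff.mp (heven α hα)
  have hαα : ⟪α, α⟫ ≠ 0 := (real_inner_self_pos.mpr (ne_of_mem_of_not_mem hα h0)).ne'
  rw [div_eq_iff hαα, ← hk, zsmul_eq_mul] at hm
  refine AddSubgroup.mem_zmultiples_iff.mpr ⟨m * k, ?_⟩
  rw [zsmul_eq_mul, mul_one]
  push_cast
  linarith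

theorem two_le_inner_self_of_mem_closure
    (hrefl : ∀ α ∈ R, ∀ β ∈ R, β - (2 * ⟪β, α⟫ / ⟪α, α⟫) • α ∈ R)
    (hcart : ∀ α ∈ R, ∀ β ∈ R, ∃ m : ℤ, 2 * ⟪β, α⟫ / ⟪α, α⟫ = m) (h0 : (0 : E) ∉ R)
    (hirr : ∀ S T : Set E, S ∪ T = R → (∀ a ∈ S, ∀ b ∈ T, ⟪a, b⟫ = 0) → S = ∅ ∨ T = ∅)
    (hshort : ∀ α ∈ R, 2 ≤ ⟪α, α⟫) {θ : E} (hθ : θ ∈ R) (hθ2 : ⟪θ, θ⟫ = 2)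
    {v : E} (hv : v ∈ AddSubgroup.closure R) (hv0 : v ≠ 0) : 2 ≤ ⟪v, v⟫ := by
  have heven := fun δ (hδ : δ ∈ R) =>
    inner_self_mem_zmultiples_two hrefl hcart h0 hirr hshort hθ hθ2 hδ
  exact le_of_mem_zmultiples_of_pos two_pos
    (inner_self_mem_zmultiples_two_of_mem_closure
      (fun s hs t ht => inner_mem_zmultiples_one hcart h0 heven ht hs) heven hv)
    (real_inner_self_pos.mpr hv0)

end RootSystem

theorem highest_short_root_least_general (n : ℕ)
    (Rset Rplus : Set (EuclideanSpace ℝ (Fin n)))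
    (simple : Fin n → EuclideanSpace ℝ (Fin n))
    (hR : Rset = Rplus ∪ (-Rplus))
    (h0 : (0 : EuclideanSpace ℝ (Fin n)) ∉ Rset)
    (hsimple : ∀ i, simple i ∈ Rplus)
    (hindep : LinearIndependent ℝ simple)
    (hpos_sum : ∀ α ∈ Rplus, ∃ c : Fin n → ℕ, α = ∑ i, (c i : ℝ) • simple i)
    (hrefl : ∀ α ∈ Rset, ∀ β ∈ Rset, β - (2 * ⟪β, α⟫ / ⟪α, α⟫) • α ∈ Rset)
    (hcart : ∀ α ∈ Rset, ∀ β ∈ Rset, ∃ m : ℤ, 2 * ⟪β, α⟫ / ⟪α, α⟫ = m)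
    (hirr : ∀ S T : Set (EuclideanSpace ℝ (Fin n)), S ∪ T = Rset →
      (∀ a ∈ S, ∀ b ∈ T, ⟪a, b⟫ = 0) → S = ∅ ∨ T = ∅)
    (hshort : ∀ α ∈ Rset, 2 ≤ ⟪α, α⟫)
    (θ : EuclideanSpace ℝ (Fin n)) (hθR : θ ∈ Rplus) (hθ2 : ⟪θ, θ⟫ = 2)
    (hθmax : ∀ α ∈ Rplus, ⟪α, α⟫ = 2 →
      ∃ c : Fin n → ℕ, θ - α = ∑ i, (c i : ℝ) • simple i) :
    ∀ b : EuclideanSpace ℝ (Fin n),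
      (∃ c : Fin n → ℕ, b = ∑ i, (c i : ℝ) • simple i) →
      (∀ i, 0 ≤ ⟪b, simple i⟫) → b ≠ 0 →
      ∃ c : Fin n → ℕ, b - θ = ∑ i, (c i : ℝ) • simple i := by
  rintro b ⟨c, hb⟩ hbdom hb0
  obtain ⟨t, ht⟩ := hpos_sum θ hθR
  have hRplus : Rplus ⊆ Rset := hR ▸ Set.subset_union_left
  set x := ∑ i, ((c i - t i : ℕ) : ℝ) • simple i
  set y := ∑ i, ((t i - c i : ℕ) : ℝ) • simple i
  have hdiff : b - θ = x - y := by
    rw [hb, ht]; exact sum_natCast_smul_sub_sum_natCast_smul c t simple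
  by_cases hy0 : y = 0
  · exact ⟨fun i => c i - t i, by rw [hdiff, hy0, sub_zero]⟩
  have hxy : ⟪x, y⟫ ≤ 0 := inner_sum_nonpos_of_disjoint
    (fun _ _ => inner_simple_nonpos hR hrefl hcart h0 hsimple hindep hpos_sum)
    (fun _ => by positivity) (fun _ => by positivity)
    (fun i => by simp only [Nat.cast_eq_zero]; omega)
  have hby : 0 ≤ ⟪b, y⟫ := inner_sum_smul_nonneg hbdom fun _ => by positivity
  have hyy : 2 ≤ ⟪y, y⟫ := two_le_inner_self_of_mem_closure hrefl hcart h0 hirr hshort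
    (hRplus hθR) hθ2 (sum_natCast_smul_mem_closure (fun i => hRplus (hsimple i)) _) hy0
  have hθy : θ = y := by
    have h := congrArg (⟪·, y⟫) hdiff
    simp only [inner_sub_left] at h
    exact eq_of_inner_self_le_inner (by linarith) (by linarith)
  have hc : ∀ i, c i = 0 := fun i => by
    have hti := coeff_pos_of_maximal hR hrefl hcart h0 hsimple hindep hpos_sum hirr hθR
      (fun α hα h => hθmax α hα (h.trans hθ2)) ht i
    have := Fintype.linearIndependent_iffₛ.mp hindep _ _ (ht.symm.trans hθy) i
    have : t i = t i - c i := by exact_mod_cast this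
    omega
  exact (hb0 (by simp [hb, hc])).elim

/-- **The highest short root is the least nonzero element of `Q₊ ∩ P₊`.**
`R = Rplus ∪ (−Rplus)` is a reduced irreducible crystallographic root system in `ℝⁿ`
with simple roots `simple i`, normalized so that short roots have `(α,α) = 2`;
`θ` is the maximal short positive root (maximal among short positive roots with
respect to the order induced by `Q₊ = ⊕ᵢ ℤ≥0 αᵢ`).  Then for every nonzero
`b ∈ Q₊ ∩ P₊` (a dominant element of the root lattice), `b − θ ∈ Q₊`. -/
theorem highest_short_root_least (n : ℕ)
    (Rset Rplus : Set (EuclideanSpace ℝ (Fin n)))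
    (simple : Fin n → EuclideanSpace ℝ (Fin n))
    (hfin : Rset.Finite)
    (hR : Rset = Rplus ∪ (-Rplus)) (hdisj : Disjoint Rplus (-Rplus))
    (h0 : (0 : EuclideanSpace ℝ (Fin n)) ∉ Rset)
    (hsimple : ∀ i, simple i ∈ Rplus)
    (hindep : LinearIndependent ℝ simple)
    (hpos_sum : ∀ α ∈ Rplus, ∃ c : Fin n → ℕ, α = ∑ i, (c i : ℝ) • simple i)
    (hrefl : ∀ α ∈ Rset, ∀ β ∈ Rset, β - (2 * ⟪β, α⟫ / ⟪α, α⟫) • α ∈ Rset)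
    (hcart : ∀ α ∈ Rset, ∀ β ∈ Rset, ∃ m : ℤ, 2 * ⟪β, α⟫ / ⟪α, α⟫ = m)
    (hred : ∀ α ∈ Rset, ∀ t : ℝ, t • α ∈ Rset → t = 1 ∨ t = -1)
    (hirr : ∀ S T : Set (EuclideanSpace ℝ (Fin n)), S ∪ T = Rset →
      (∀ a ∈ S, ∀ b ∈ T, ⟪a, b⟫ = 0) → S = ∅ ∨ T = ∅)
    (hshort : ∀ α ∈ Rset, 2 ≤ ⟪α, α⟫)
    (θ : EuclideanSpace ℝ (Fin n)) (hθR : θ ∈ Rplus) (hθ2 : ⟪θ, θ⟫ = 2)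
    (hθmax : ∀ α ∈ Rplus, ⟪α, α⟫ = 2 →
      ∃ c : Fin n → ℕ, θ - α = ∑ i, (c i : ℝ) • simple i) :
    ∀ b : EuclideanSpace ℝ (Fin n),
      (∃ c : Fin n → ℕ, b = ∑ i, (c i : ℝ) • simple i) →
      (∀ i, 0 ≤ ⟪b, simple i⟫) → b ≠ 0 →
      ∃ c : Fin n → ℕ, b - θ = ∑ i, (c i : ℝ) • simple i :=
  highest_short_root_least_general n Rset Rplus simple hR h0 hsimple hindep hpos_sum hrefl hcart
    hirr hshort θ hθR hθ2 hθmax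
end

section
/- For w ∈ W and b ∈ P, every affine root [α, ν_α j] in λ(wb) has positive nonaffine component α ∈ R_+ if and only if for all α ∈ R_+: (b, α∨) ≥ −1, and (b, α∨) = −1 implies α ∈ λ(w). In particular every element ŵ ∈ W · P_+ (i.e., ŵ = w b with b dominant) has this property. -/
open scoped RealInnerProductSpace Pointwise BigOperators

noncomputable section

/-- Euclidean `n`-space, the ambient space of the root system. -/
abbrev V (n : ℕ) := EuclideanSpace ℝ (Fin n)

/-- An element `w ∘ b'` of the extended affine Weyl group `Ŵ = W ⋉ P'`:
`w` is the (finite) Weyl-group part, `b` the translation part. -/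
structure ExtElem (n : ℕ) where
  w : V n ≃ₗᵢ[ℝ] V n
  b : V n

namespace ExtElem

variable {n : ℕ}

/-- The identity element of `Ŵ`. -/
def one : ExtElem n := ⟨LinearIsometryEquiv.refl ℝ (V n), 0⟩

/-- Multiplication in `Ŵ`: `(w₁ b₁')·(w₂ b₂') = (w₁w₂)((w₂⁻¹ b₁ + b₂)')`. -/
def mul (x y : ExtElem n) : ExtElem n := ⟨y.w.trans x.w, y.w.symm x.b + y.b⟩

/-- Inversion in `Ŵ`. -/
def inv (x : ExtElem n) : ExtElem n := ⟨x.w.symm, -(x.w x.b)⟩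

/-- The action of `Ŵ` on affine roots `[z, ζ]`:  `(w b')([z,ζ]) = [w z, ζ − (z,b)]`. -/
def act (x : ExtElem n) (p : V n × ℝ) : V n × ℝ := (x.w p.1, p.2 - ⟪p.1, x.b⟫)

/-- The affine action of `Ŵ` on `ℝⁿ`: `(w b')((z)) = w(z + b)`. -/
def affAct (x : ExtElem n) (z : V n) : V n := x.w (z + x.b)

/-- A Weyl group element `w` viewed in `Ŵ`. -/
def we (u : V n ≃ₗᵢ[ℝ] V n) : ExtElem n := ⟨u, 0⟩

/-- A translation `b'` viewed in `Ŵ`. -/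
def tr (b : V n) : ExtElem n := ⟨LinearIsometryEquiv.refl ℝ (V n), b⟩

end ExtElem

variable {n : ℕ}

/-- `ν_α = (α,α)/2`. -/
def nuv (α : V n) : ℝ := ⟪α, α⟫ / 2

/-- The coroot pairing `(b, α∨) = 2(b,α)/(α,α)`. -/
def pairv (b α : V n) : ℝ := 2 * ⟪b, α⟫ / ⟪α, α⟫

/-- The positive affine roots `R̃₊ = R₊ ∪ {[α, ν_α j] : α ∈ R, j > 0}`, realized as
pairs `(α, m)` with `m ∈ ν_α ℤ`. -/
def AffPlus (R Rplus : Set (V n)) : Set (V n × ℝ) :=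
  {p | p.1 ∈ R ∧ (∃ j : ℤ, p.2 = nuv p.1 * j) ∧ (0 < p.2 ∨ (p.2 = 0 ∧ p.1 ∈ Rplus))}

/-- `λ(ŵ) = R̃₊ ∩ ŵ⁻¹(R̃₋)`. -/
def lamSet (R Rplus : Set (V n)) (x : ExtElem n) : Set (V n × ℝ) :=
  AffPlus R Rplus ∩ {p | x.act p ∈ -AffPlus R Rplus}

/-- The length `l(ŵ) = |λ(ŵ)|`. -/
noncomputable def len (R Rplus : Set (V n)) (x : ExtElem n) : ℕ :=
  (lamSet R Rplus x).ncard

/-- Membership in the weight lattice `P`: `(α∨, b) ∈ ℤ` for all roots. -/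
def inLat (R : Set (V n)) (b : V n) : Prop :=
  ∀ α ∈ R, ∃ m : ℤ, ⟪α, b⟫ = nuv α * m

/-- Reflections `s_α`, `α ∈ R`. -/
def IsReflection (R : Set (V n)) (g : V n ≃ₗᵢ[ℝ] V n) : Prop :=
  ∃ α ∈ R, ∀ z, g z = z - pairv z α • α

/-- The Weyl group `W`, generated by the reflections `s_α`, `α ∈ R`. -/
def Weyl (R : Set (V n)) : Subgroup (V n ≃ₗᵢ[ℝ] V n) :=
  Subgroup.closure {g | IsReflection R g}

/-- `π_b = b·u_b⁻¹ = u_b⁻¹ ∘ (u_b b)' ∈ Ŵ` for `u ∈ W`. -/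
def piE (u : V n ≃ₗᵢ[ℝ] V n) (b : V n) : ExtElem n := ⟨u.symm, u b⟩

/-- `u = u_b`: the shortest element of `W` with `u(b) = b₋ ∈ P₋`, characterized by
`u(b)` antidominant together with `α ∈ λ(u) ⇒ (α, b) ≠ 0`. -/
def IsUb (R Rplus : Set (V n)) (b : V n) (u : V n ≃ₗᵢ[ℝ] V n) : Prop :=
  u ∈ Weyl R ∧ (∀ α ∈ Rplus, ⟪u b, α⟫ ≤ 0) ∧
    ∀ α ∈ Rplus, u α ∈ -Rplus → ⟪α, b⟫ ≠ 0

end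

section Helper

variable {n : ℕ}

lemma nuv_pos {α : V n} (h : α ≠ 0) : 0 < nuv α := by
  have h1 : (0:ℝ) ≤ ⟪α, α⟫ := real_inner_self_nonneg
  have h2 : ⟪α, α⟫ ≠ 0 := fun hc => h (inner_self_eq_zero.mp hc)
  unfold nuv
  cases h1.lt_or_eq with
  | inl h3 => linarith
  | inr h3 => exact absurd h3.symm h2

lemma nuv_neg (α : V n) : nuv (-α) = nuv α := by simp [nuv]

lemma nuv_iso (w : V n ≃ₗᵢ[ℝ] V n) (α : V n) : nuv (w α) = nuv α := by
  simp [nuv, LinearIsometryEquiv.inner_map_map]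

lemma pairv_eq_of {α b : V n} {m : ℤ} (hα : α ≠ 0) (h : ⟪α, b⟫ = nuv α * m) :
    pairv b α = m := by
  have h2 : ⟪α, α⟫ ≠ 0 := fun hc => hα (inner_self_eq_zero.mp hc)
  have hs : ⟪b, α⟫ = ⟪α, α⟫ / 2 * m := by rw [real_inner_comm]; exact h
  unfold pairv
  rw [hs]
  generalize hip : ⟪α, α⟫ = s at *
  field_simp

lemma refl_invol {R : Set (V n)} (h0 : (0:V n) ∉ R) {g : V n ≃ₗᵢ[ℝ] V n}
    (hg : IsReflection R g) (z : V n) : g (g z) = z := by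
  obtain ⟨α, hαR, hform⟩ := hg
  have hα : α ≠ 0 := fun hc => h0 (hc ▸ hαR)
  have h2 : ⟪α, α⟫ ≠ 0 := fun hc => hα (inner_self_eq_zero.mp hc)
  rw [hform, hform]
  have : pairv (z - pairv z α • α) α = - pairv z α := by
    unfold pairv
    rw [inner_sub_left, real_inner_smul_left]
    generalize hip : ⟪α, α⟫ = s at *
    generalize ⟪z, α⟫ = t
    field_simp
    ring
  rw [this]
  module

lemma weyl_maps_R {R : Set (V n)} (h0 : (0:V n) ∉ R)
    (hrefl : ∀ α ∈ R, ∀ β ∈ R, β - pairv β α • α ∈ R)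
    {w : V n ≃ₗᵢ[ℝ] V n} (hw : w ∈ Weyl R) : ∀ α ∈ R, w α ∈ R := by
  have key : ∀ g ∈ Weyl R, (∀ α ∈ R, g α ∈ R) ∧ (∀ α ∈ R, g⁻¹ α ∈ R) := by
    intro g hg
    induction hg using Subgroup.closure_induction with
    | mem x hx =>
      obtain ⟨α, hαR, hform⟩ := hx
      have hmap : ∀ β ∈ R, x β ∈ R := fun β hβ => by
        rw [hform]; exact hrefl α hαR β hβ
      refine ⟨hmap, fun β hβ => ?_⟩
      have hxx : x⁻¹ β = x β := by
        have hi := refl_invol h0 ⟨α, hαR, hform⟩ β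
        calc x⁻¹ β = x⁻¹ (x (x β)) := by rw [hi]
        _ = x β := by simp [LinearIsometryEquiv.coe_inv]
      rw [hxx]; exact hmap β hβ
    | one => simp
    | mul x y hx hy ihx ihy =>
      refine ⟨fun α hα => ?_, fun α hα => ?_⟩
      · have hc : (x * y) α = x (y α) := by simp [LinearIsometryEquiv.coe_mul]
        rw [hc]; exact ihx.1 _ (ihy.1 _ hα)
      · have hc : (x * y)⁻¹ α = y⁻¹ (x⁻¹ α) := by
          rw [mul_inv_rev]; simp [LinearIsometryEquiv.coe_mul]
        rw [hc]; exact ihy.2 _ (ihx.2 _ hα)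
    | inv x hx ih => exact ⟨ih.2, by simpa using ih.1⟩
  exact (key w hw).1

lemma mem_lamSet_iff {R Rplus : Set (V n)} (w : V n ≃ₗᵢ[ℝ] V n) (b : V n) (p : V n × ℝ) :
    p ∈ lamSet R Rplus (ExtElem.mk w b) ↔
      ((p.1 ∈ R ∧ (∃ j : ℤ, p.2 = nuv p.1 * j) ∧ (0 < p.2 ∨ (p.2 = 0 ∧ p.1 ∈ Rplus))) ∧
       (-(w p.1) ∈ R ∧ (∃ j : ℤ, ⟪p.1, b⟫ - p.2 = nuv (w p.1) * j) ∧
        (0 < ⟪p.1, b⟫ - p.2 ∨ (⟪p.1, b⟫ - p.2 = 0 ∧ -(w p.1) ∈ Rplus)))) := by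
  unfold lamSet AffPlus ExtElem.act
  simp only [Set.mem_inter_iff, Set.mem_setOf_eq, Set.mem_neg, Prod.fst_neg, Prod.snd_neg,
    neg_sub, nuv_neg]

end Helper

/-- For `w ∈ W` and `b ∈ P`, every affine root `[α, ν_α j] ∈ λ(wb)` has positive
nonaffine component `α ∈ R₊` if and only if for all `α ∈ R₊`: `(b,α∨) ≥ −1`, and
`(b,α∨) = −1` implies `α ∈ λ(w)`.  In particular every `ŵ ∈ W·P₊` has this
property. -/
theorem lam_positive_nonaffine (n : ℕ) (R Rplus : Set (V n))
    (hfin : R.Finite) (hR : R = Rplus ∪ (-Rplus)) (hdisj : Disjoint Rplus (-Rplus))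
    (h0 : (0 : V n) ∉ R)
    (hrefl : ∀ α ∈ R, ∀ β ∈ R, β - pairv β α • α ∈ R)
    (w : V n ≃ₗᵢ[ℝ] V n) (hw : w ∈ Weyl R)
    (b : V n) (hb : inLat R b) :
    ((∀ p ∈ lamSet R Rplus (ExtElem.mk w b), p.1 ∈ Rplus) ↔
      (∀ α ∈ Rplus, -1 ≤ pairv b α ∧ (pairv b α = -1 → w α ∈ -Rplus))) ∧
    ((∀ α ∈ Rplus, 0 ≤ pairv b α) →
      ∀ p ∈ lamSet R Rplus (ExtElem.mk w b), p.1 ∈ Rplus) :=  by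
  have hWmaps := weyl_maps_R h0 hrefl hw
  have hRneg : ∀ α, α ∈ R → -α ∈ R := by
    intro α hα
    rw [hR] at hα ⊢
    rcases hα with h1 | h1
    · exact Or.inr (by simpa using h1)
    · exact Or.inl (by simpa using h1)
  -- backward direction: the pairing condition implies positivity of nonaffine parts
  have hback : (∀ α ∈ Rplus, -1 ≤ pairv b α ∧ (pairv b α = -1 → w α ∈ -Rplus)) →
      ∀ p ∈ lamSet R Rplus (ExtElem.mk w b), p.1 ∈ Rplus := by
    intro hRHS p hp
    rw [mem_lamSet_iff] at hp
    obtain ⟨⟨hβR, ⟨j, hj⟩, hpos⟩, ⟨_, _, hneg⟩⟩ := hp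
    by_contra hβ
    have hβm : p.1 ∈ -Rplus := by
      rw [hR, Set.mem_union] at hβR; tauto
    have hαp : -p.1 ∈ Rplus := Set.mem_neg.mp hβm
    have hαR : -p.1 ∈ R := by rw [hR]; exact Set.mem_union_left _ hαp
    have hα0 : -p.1 ≠ 0 := fun hc => h0 (hc ▸ hαR)
    obtain ⟨m, hm⟩ := hb (-p.1) hαR
    have hν : nuv (-p.1) = nuv p.1 := nuv_neg p.1
    have hνpos : 0 < nuv p.1 := by rw [← hν]; exact nuv_pos hα0
    have hpairv : pairv b (-p.1) = m := pairv_eq_of hα0 hm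
    obtain ⟨hge, heq⟩ := hRHS (-p.1) hαp
    rw [hpairv] at hge heq
    -- p.2 > 0, so j ≥ 1
    have hp2pos : 0 < p.2 := by
      rcases hpos with h1 | ⟨_, h1⟩
      · exact h1
      · exact absurd h1 hβ
    have hj1 : (1:ℝ) ≤ (j:ℝ) := by
      have hjp : (0:ℝ) < (j:ℝ) := by
        by_contra hc
        push_neg at hc
        nlinarith [hj ▸ hp2pos]
      have : (0:ℤ) < j := by exact_mod_cast hjp
      exact_mod_cast this
    -- the value ⟪p.1,b⟫ - p.2
    have hval : ⟪p.1, b⟫ - p.2 = nuv p.1 * (-(m:ℝ) - j) := by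
      have h1 : ⟪p.1, b⟫ = -(nuv p.1 * m) := by
        have h2 : ⟪-p.1, b⟫ = -⟪p.1, b⟫ := inner_neg_left _ _
        rw [h2, hν] at hm
        linarith
      rw [h1, hj]
      ring
    rcases hneg with h2 | ⟨h2, h3⟩
    · rw [hval] at h2
      have : 0 < -(m:ℝ) - j := by
        by_contra hc
        push_neg at hc
        nlinarith
      linarith
    · rw [hval] at h2
      have hmj : -(m:ℝ) - j = 0 := by
        rcases mul_eq_zero.mp h2 with h4 | h4
        · exact absurd h4 (ne_of_gt hνpos)
        · exact h4
      have hm1 : (m:ℝ) = -1 := by linarith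
      have hwin : w (-p.1) ∈ -Rplus := heq (by rw [hm1])
      have hwne : w (-p.1) = -(w p.1) := map_neg w p.1
      rw [hwne] at hwin
      have hwp : -(w p.1) ∈ Rplus := h3
      exact Set.disjoint_left.mp hdisj hwp hwin
  refine ⟨⟨?_, hback⟩, fun hposall => hback fun α hα => ⟨by linarith [hposall α hα],
    fun he => by linarith [hposall α hα]⟩⟩
  -- forward direction
  intro hL α hα
  have hαR : α ∈ R := by rw [hR]; exact Or.inl hα
  have hα0 : α ≠ 0 := fun hc => h0 (hc ▸ hαR)
  obtain ⟨m, hm⟩ := hb α hαR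
  have hνpos : 0 < nuv α := nuv_pos hα0
  have hpairv : pairv b α = m := pairv_eq_of hα0 hm
  have hnegα : -α ∈ R := hRneg α hαR
  have hwαR : w α ∈ R := hWmaps α hαR
  have hwneg : w (-α) = -(w α) := map_neg w α
  have hαneg : -α ∈ -Rplus := by simpa using hα
  have hmemmk : ∀ jr : ℤ, ((-α : V n), nuv α * 1) ∈ lamSet R Rplus (ExtElem.mk w b) →
      False := by
    intro _ hmem
    have := hL _ hmem
    exact Set.disjoint_left.mp hdisj this hαneg
  constructor
  · by_contra hlt
    push_neg at hlt
    rw [hpairv] at hlt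
    have hm2 : (m:ℝ) ≤ -2 := by
      have : m < -1 := by exact_mod_cast hlt
      have : m ≤ -2 := by omega
      exact_mod_cast this
    apply hmemmk 0
    rw [mem_lamSet_iff]
    refine ⟨⟨hnegα, ⟨1, by rw [nuv_neg]; push_cast; ring⟩, Or.inl (by simpa using hνpos)⟩,
      ?_, ⟨-(m+1), ?_⟩, Or.inl ?_⟩
    · simp only [hwneg, neg_neg]
      exact hwαR
    · show ⟪-α, b⟫ - nuv α * 1 = nuv (w (-α)) * (-(m+1) : ℤ)
      rw [nuv_iso, nuv_neg]
      have h2 : ⟪-α, b⟫ = -⟪α, b⟫ := inner_neg_left _ _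
      rw [h2, hm]
      push_cast
      ring
    · show 0 < ⟪-α, b⟫ - nuv α * 1
      have h2 : ⟪-α, b⟫ = -⟪α, b⟫ := inner_neg_left _ _
      rw [h2, hm]
      nlinarith
  · intro hme
    rw [hpairv] at hme
    have hm1 : (m:ℝ) = -1 := hme
    by_contra hwm
    have hwαp : w α ∈ Rplus := by
      rw [hR] at hwαR
      rcases hwαR with h1 | h1
      · exact h1
      · exact absurd h1 hwm
    apply hmemmk 0
    rw [mem_lamSet_iff]
    refine ⟨⟨hnegα, ⟨1, by rw [nuv_neg]; push_cast; ring⟩, Or.inl (by simpa using hνpos)⟩,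
      ?_, ⟨0, ?_⟩, Or.inr ⟨?_, ?_⟩⟩
    · simp only [hwneg, neg_neg]
      exact hwαR
    · show ⟪-α, b⟫ - nuv α * 1 = nuv (w (-α)) * (0 : ℤ)
      have h2 : ⟪-α, b⟫ = -⟪α, b⟫ := inner_neg_left _ _
      rw [h2, hm]
      push_cast
      nlinarith [hm1]
    · show ⟪-α, b⟫ - nuv α * 1 = 0
      have h2 : ⟪-α, b⟫ = -⟪α, b⟫ := inner_neg_left _ _
      rw [h2, hm, hm1]
      ring
    · simp only [hwneg, neg_neg]
      exact hwαp
end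

section
/- For c ∈ P and r ∈ O' (a nontrivial element of the group Π of affine Dynkin diagram automorphisms), π_r π_c = π_b where b = π_r((c)) is the image of c under the affine action of π_r. Moreover u_b = u_c u_r, b = ω_r + u_r⁻¹(c), and b_− = c_− + u_c w₀(ω_r); in particular c_− + u_c w₀(ω_r) always lies in P_−. -/
open scoped RealInnerProductSpace Pointwise BigOperators

/-!
Once `u_b = u_c u_r` is known, `π_r π_c = π_b` with `b = ω_r + u_r⁻¹ c` is a computation in `Ŵ`,
so everything reduces to checking that `u_c u_r` satisfies the characterization of `u_b`.

The key input is that a `W`-orbit meets the closed antidominant chamber in at most one point. We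
prove it with simple roots (the indecomposable positive roots): they are pairwise obtuse, hence
linearly independent, so `s_δ` only sends the positive multiples of `δ` to negative roots. Then `W`
is generated by the `s_δ`, and a strong induction on the length of a word in them proves
uniqueness. Applied to `w₀ u_r⁻¹`, it gives `u_r ω_r = w₀ ω_r`, hence `u_c u_r b = c₋ + u_c w₀ ω_r`.

This vector is antidominant. The only delicate positive roots are `α = -u_c γ` with `γ > 0`: then
`γ` is an inversion of `u_c`, so `(c, γ) > 0`, and `c ∈ P` gives `(c, γ) ≥ ν_γ`, while `ω_r`
minuscule gives `-(w₀ ω_r, γ) ≤ ν_γ`. The condition on the inversion set of `u_c u_r` follows by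
splitting according to the sign of `u_r α`.
-/

open scoped NNReal

lemma Set.Finite.wellFoundedOn_lt_on {ι : Type*} {s : Set ι} (hs : s.Finite) (f : ι → ℝ) :
    s.WellFoundedOn (fun a b => f a < f b) :=
  Set.wellFoundedOn_image.1 (hs.image f).wellFoundedOn

lemma eq_zero_or_inner_pos_of_mem_span {E : Type*} [NormedAddCommGroup E] [InnerProductSpace ℝ E]
    {S : Set E} {v : E} (hv : ∀ γ ∈ S, 0 < ⟪v, γ⟫) {x : E} (hx : x ∈ Submodule.span ℝ≥0 S) :
    x = 0 ∨ 0 < ⟪v, x⟫ := by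
  induction hx using Submodule.span_induction with
  | mem γ hγ => exact .inr (hv γ hγ)
  | zero => exact .inl rfl
  | add x y _ _ hx hy =>
    rcases hx with rfl | hx
    · simpa using hy
    rcases hy with rfl | hy
    · simpa using Or.inr hx
    · exact .inr (by rw [inner_add_right]; positivity)
  | smul t x _ hx =>
    rcases eq_or_ne t 0 with rfl | ht
    · simp
    rcases hx with rfl | hx
    · simp
    · exact .inr (by rw [NNReal.smul_def, real_inner_smul_right]; positivity)

section RootSystem

variable {n : ℕ}

lemma inner_eq_pairv_mul_nuv (x α : V n) : ⟪x, α⟫ = pairv x α * nuv α := by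
  by_cases hα : α = 0
  · simp [hα, nuv]
  have := (real_inner_self_pos (x := α)).2 hα
  unfold pairv nuv
  field_simp

lemma nuv_nonneg (α : V n) : 0 ≤ nuv α := div_nonneg real_inner_self_nonneg zero_le_two

lemma pairv_map (u : V n ≃ₗᵢ[ℝ] V n) (x α : V n) : pairv (u x) (u α) = pairv x α := by
  simp only [pairv, LinearIsometryEquiv.inner_map_map]

noncomputable abbrev rootReflection (α : V n) : V n ≃ₗᵢ[ℝ] V n := (ℝ ∙ α)ᗮ.reflection

lemma rootReflection_apply (α z : V n) : rootReflection α z = z - pairv z α • α := by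
  rw [rootReflection, Submodule.reflection_orthogonal_apply, Submodule.reflection_singleton_apply,
    pairv, real_inner_self_eq_norm_sq, real_inner_comm]
  module

lemma rootReflection_apply_self (α : V n) : rootReflection α α = -α :=
  Submodule.reflection_orthogonalComplement_singleton_eq_neg α

lemma rootReflection_inv (α : V n) : (rootReflection α)⁻¹ = rootReflection α :=
  Submodule.reflection_inv

lemma inner_rootReflection_self (α x : V n) : ⟪rootReflection α x, α⟫ = -⟪x, α⟫ := by
  rw [← LinearIsometryEquiv.inner_map_map (rootReflection α), Submodule.reflection_reflection,
    rootReflection_apply_self, inner_neg_right]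

lemma rootReflection_smul {t : ℝ} (ht : t ≠ 0) (α : V n) :
    rootReflection (t • α) = rootReflection α := by
  simp only [rootReflection, Submodule.span_singleton_smul_eq (IsUnit.mk0 t ht)]

lemma rootReflection_neg (α : V n) : rootReflection (-α) = rootReflection α := by
  simpa using rootReflection_smul (t := -1) (by norm_num) α

lemma rootReflection_map (u : V n ≃ₗᵢ[ℝ] V n) (α : V n) :
    rootReflection (u α) = u * rootReflection α * u⁻¹ := by
  ext1 z
  have h := pairv_map u (u.symm z) α
  rw [u.apply_symm_apply] at h
  simp [rootReflection_apply, h]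

section Weyl

variable {R : Set (V n)}

lemma isReflection_iff {g : V n ≃ₗᵢ[ℝ] V n} :
    IsReflection R g ↔ ∃ α ∈ R, g = rootReflection α := by
  simp only [IsReflection, LinearIsometryEquiv.ext_iff, rootReflection_apply]

lemma rootReflection_mem_weyl {α : V n} (hα : α ∈ R) : rootReflection α ∈ Weyl R :=
  Subgroup.subset_closure (isReflection_iff.2 ⟨α, hα, rfl⟩)

lemma apply_mem_iff_of_mem_weyl (hrefl : ∀ α ∈ R, ∀ β ∈ R, β - pairv β α • α ∈ R)
    {w : V n ≃ₗᵢ[ℝ] V n} (hw : w ∈ Weyl R) (β : V n) : w β ∈ R ↔ β ∈ R := by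
  induction hw using Subgroup.closure_induction generalizing β with
  | mem g hg =>
    obtain ⟨α, hα, rfl⟩ := isReflection_iff.1 hg
    refine ⟨fun h => ?_, fun h => ?_⟩
    · simpa only [← rootReflection_apply, Submodule.reflection_reflection] using hrefl α hα _ h
    · simpa only [← rootReflection_apply] using hrefl α hα β h
  | one => rfl
  | mul x y _ _ hx hy => simp only [LinearIsometryEquiv.coe_mul, Function.comp_apply, hx, hy]
  | inv x _ hx => rw [← hx, LinearIsometryEquiv.coe_inv, LinearIsometryEquiv.apply_symm_apply]

end Weyl

structure IsPosRootSystem (R Rplus : Set (V n)) : Prop where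
  finite : R.Finite
  eq_union : R = Rplus ∪ -Rplus
  disjoint : Disjoint Rplus (-Rplus)
  zero_notMem : (0 : V n) ∉ R
  sub_pairv_smul_mem : ∀ α ∈ R, ∀ β ∈ R, β - pairv β α • α ∈ R
  exists_pairv_eq_int : ∀ α ∈ R, ∀ β ∈ R, ∃ m : ℤ, pairv β α = m
  exists_inner_pos : ∃ v : V n, ∀ α ∈ Rplus, 0 < ⟪v, α⟫

def simpleRoots (Rplus : Set (V n)) : Set (V n) :=
  {β ∈ Rplus | ∀ γ₁ ∈ Rplus, ∀ γ₂ ∈ Rplus, γ₁ + γ₂ ≠ β}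

def simpleReflections (Rplus : Set (V n)) : Set (V n ≃ₗᵢ[ℝ] V n) :=
  rootReflection '' simpleRoots Rplus

def IsAntidominant (Rplus : Set (V n)) (x : V n) : Prop :=
  ∀ α ∈ Rplus, ⟪x, α⟫ ≤ 0

namespace IsPosRootSystem

variable {R Rplus : Set (V n)}

lemma pos_subset (hΦ : IsPosRootSystem R Rplus) : Rplus ⊆ R :=
  hΦ.eq_union ▸ Set.subset_union_left

lemma finite_pos (hΦ : IsPosRootSystem R Rplus) : Rplus.Finite :=
  hΦ.finite.subset hΦ.pos_subset

lemma mem_or_mem_neg (hΦ : IsPosRootSystem R Rplus) {α : V n} (hα : α ∈ R) :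
    α ∈ Rplus ∨ α ∈ -Rplus := by
  rwa [hΦ.eq_union] at hα

lemma neg_mem (hΦ : IsPosRootSystem R Rplus) {α : V n} (hα : α ∈ R) : -α ∈ R := by
  rw [hΦ.eq_union] at hα ⊢
  rcases hα with h | h
  · exact .inr (by simpa using h)
  · exact .inl h

lemma ne_zero (hΦ : IsPosRootSystem R Rplus) {α : V n} (hα : α ∈ R) : α ≠ 0 :=
  fun h => hΦ.zero_notMem (h ▸ hα)

lemma apply_mem (hΦ : IsPosRootSystem R Rplus) {w : V n ≃ₗᵢ[ℝ] V n} (hw : w ∈ Weyl R)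
    {β : V n} (hβ : β ∈ R) : w β ∈ R :=
  (apply_mem_iff_of_mem_weyl hΦ.sub_pairv_smul_mem hw β).2 hβ

lemma pairv_eq_one_or_inner_self_le (hΦ : IsPosRootSystem R Rplus) {x y : V n} (hx : x ∈ R)
    (hy : y ∈ R) (hxy : 0 < ⟪x, y⟫) : pairv x y = 1 ∨ ⟪y, y⟫ ≤ ⟪x, y⟫ := by
  obtain ⟨m, hm⟩ := hΦ.exists_pairv_eq_int y hy x hx
  have hyy := real_inner_self_pos.2 (hΦ.ne_zero hy)
  have hm0 : (0 : ℝ) < m := by rw [← hm, pairv]; positivity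
  obtain rfl | h2 : m = 1 ∨ 2 ≤ m := by
    have : (0 : ℤ) < m := by exact_mod_cast hm0
    omega
  · exact .inl (by simpa using hm)
  · have : (2 : ℝ) ≤ pairv x y := hm ▸ by exact_mod_cast h2
    rw [pairv, le_div_iff₀ hyy] at this
    exact .inr (by linarith)

lemma sub_mem_of_inner_pos (hΦ : IsPosRootSystem R Rplus) {α β : V n} (hα : α ∈ R) (hβ : β ∈ R)
    (hne : α ≠ β) (hpos : 0 < ⟪α, β⟫) : α - β ∈ R := by
  rcases hΦ.pairv_eq_one_or_inner_self_le hα hβ hpos with h | h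
  · simpa [h] using hΦ.sub_pairv_smul_mem β hβ α hα
  rcases hΦ.pairv_eq_one_or_inner_self_le hβ hα (real_inner_comm α β ▸ hpos) with h' | h'
  · simpa [h'] using hΦ.neg_mem (hΦ.sub_pairv_smul_mem α hα β hβ)
  · refine absurd (sub_eq_zero.1 (real_inner_self_nonpos.1 ?_)) hne
    rw [inner_sub_left, inner_sub_right, inner_sub_right]
    linarith [real_inner_comm α β]

lemma inner_nonpos_of_mem_simpleRoots (hΦ : IsPosRootSystem R Rplus) {δ δ' : V n}
    (hδ : δ ∈ simpleRoots Rplus) (hδ' : δ' ∈ simpleRoots Rplus) (hne : δ ≠ δ') :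
    ⟪δ, δ'⟫ ≤ 0 := by
  by_contra! hpos
  rcases hΦ.mem_or_mem_neg (hΦ.sub_mem_of_inner_pos (hΦ.pos_subset hδ.1) (hΦ.pos_subset hδ'.1)
    hne hpos) with h | h
  · exact hδ.2 _ h δ' hδ'.1 (sub_add_cancel δ δ')
  · exact hδ'.2 _ (by simpa using h) δ hδ.1 (sub_add_cancel δ' δ)

lemma linearIndepOn_simpleRoots (hΦ : IsPosRootSystem R Rplus) :
    LinearIndepOn ℝ id (simpleRoots Rplus) := by
  obtain ⟨v, hv⟩ := hΦ.exists_inner_pos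
  exact LinearMap.BilinForm.linearIndependent_of_pairwise_le_zero (innerₗ (V n))
    (fun x hx => real_inner_self_pos.2 hx) (innerₗ (V n) v) _ (fun δ => hv δ δ.2.1)
    (fun δ δ' hne => hΦ.inner_nonpos_of_mem_simpleRoots δ.2 δ'.2 (Subtype.coe_ne_coe.2 hne))

lemma mem_span_simpleRoots (hΦ : IsPosRootSystem R Rplus) {α : V n} (hα : α ∈ Rplus) :
    α ∈ Submodule.span ℝ≥0 (simpleRoots Rplus) := by
  obtain ⟨v, hv⟩ := hΦ.exists_inner_pos
  refine (hΦ.finite_pos.wellFoundedOn_lt_on (⟪v, ·⟫)).induction hα fun α hα ih => ?_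
  by_cases hs : α ∈ simpleRoots Rplus
  · exact Submodule.subset_span hs
  obtain ⟨γ₁, hγ₁, γ₂, hγ₂, rfl⟩ : ∃ γ₁ ∈ Rplus, ∃ γ₂ ∈ Rplus, γ₁ + γ₂ = α := by
    simpa [simpleRoots, hα] using hs
  have h₁ := hv γ₁ hγ₁
  have h₂ := hv γ₂ hγ₂
  exact add_mem (ih γ₁ hγ₁ (by rw [inner_add_right]; linarith))
    (ih γ₂ hγ₂ (by rw [inner_add_right]; linarith))

lemma exists_simpleRoot_inner_pos (hΦ : IsPosRootSystem R Rplus) {α : V n} (hα : α ∈ Rplus) :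
    ∃ δ ∈ simpleRoots Rplus, 0 < ⟪α, δ⟫ := by
  by_contra! h
  have hnonpos : ∀ y ∈ Submodule.span ℝ≥0 (simpleRoots Rplus), ⟪α, y⟫ ≤ 0 := fun y hy => by
    induction hy using Submodule.span_induction with
    | mem δ hδ => exact h δ hδ
    | zero => simp
    | add x y _ _ hx hy => rw [inner_add_right]; linarith
    | smul t x _ hx =>
      rw [NNReal.smul_def, real_inner_smul_right]
      exact mul_nonpos_of_nonneg_of_nonpos t.2 hx
  exact hΦ.ne_zero (hΦ.pos_subset hα)
    (real_inner_self_nonpos.1 (hnonpos α (hΦ.mem_span_simpleRoots hα)))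

lemma rootReflection_eq_of_apply_mem_neg (hΦ : IsPosRootSystem R Rplus) {δ β : V n}
    (hδ : δ ∈ simpleRoots Rplus) (hβ : β ∈ Rplus) (hneg : rootReflection δ β ∈ -Rplus) :
    rootReflection β = rootReflection δ := by
  obtain ⟨v, hv⟩ := hΦ.exists_inner_pos
  set Δ' := simpleRoots Rplus \ {δ}
  have hins : simpleRoots Rplus = insert δ Δ' := (Set.insert_sdiff_self_of_mem hδ).symm
  have hneg' : pairv β δ • δ - β ∈ Rplus := by simpa [rootReflection_apply] using hneg
  obtain ⟨a, x, hx, hβx⟩ := Submodule.mem_span_insert.1 (hins ▸ hΦ.mem_span_simpleRoots hβ)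
  obtain ⟨b, y, hy, hy'⟩ := Submodule.mem_span_insert.1 (hins ▸ hΦ.mem_span_simpleRoots hneg')
  rw [NNReal.smul_def] at hβx hy'
  -- `x + y` lies in `ℝ δ ∩ span ℝ Δ'`, which is `0` by independence; then salience of the cone
  -- spanned by `Δ'` forces `x = 0`.
  have hxy : x + y = (pairv β δ - a - b) • δ := by
    linear_combination (norm := module) -hy' - hβx
  have hxy0 : x + y = 0 := by
    by_contra hne
    have ht : pairv β δ - a - b ≠ 0 := fun h => hne (by simp [hxy, h])
    refine hΦ.linearIndepOn_simpleRoots.notMem_span hδ ?_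
    have hspan : x + y ∈ Submodule.span ℝ Δ' :=
      add_mem (Submodule.span_le_restrictScalars ℝ≥0 ℝ Δ' hx)
        (Submodule.span_le_restrictScalars ℝ≥0 ℝ Δ' hy)
    simpa [hxy, smul_smul, inv_mul_cancel₀ ht] using
      Submodule.smul_mem _ (pairv β δ - a - b)⁻¹ hspan
  have hx0 : x = 0 := by
    have hvΔ' : ∀ γ ∈ Δ', 0 < ⟪v, γ⟫ := fun γ hγ => hv γ hγ.1.1
    rcases eq_zero_or_inner_pos_of_mem_span hvΔ' hx with h | h
    · exact h
    rcases eq_zero_or_inner_pos_of_mem_span hvΔ' hy with h' | h'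
    · simpa [h'] using hxy0
    · have := congrArg (⟪v, ·⟫) hxy0
      simp only [inner_add_right, inner_zero_right] at this
      linarith
  have ha : (a : ℝ) ≠ 0 := fun h => hΦ.ne_zero (hΦ.pos_subset hβ) (by simp [hβx, hx0, h])
  rw [hβx, hx0, add_zero, rootReflection_smul ha]

lemma list_prod_mem_weyl (hΦ : IsPosRootSystem R Rplus) {l : List (V n ≃ₗᵢ[ℝ] V n)}
    (hl : ∀ x ∈ l, x ∈ simpleReflections Rplus) : l.prod ∈ Weyl R :=
  Subgroup.list_prod_mem _ fun x hx => by
    obtain ⟨δ, hδ, rfl⟩ := hl x hx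
    exact rootReflection_mem_weyl (hΦ.pos_subset hδ.1)

lemma rootReflection_mem_closure (hΦ : IsPosRootSystem R Rplus) {α : V n} (hα : α ∈ Rplus) :
    rootReflection α ∈ Subgroup.closure (simpleReflections Rplus) := by
  obtain ⟨v, hv⟩ := hΦ.exists_inner_pos
  refine (hΦ.finite_pos.wellFoundedOn_lt_on (⟪v, ·⟫)).induction hα
    (P := fun α => rootReflection α ∈ Subgroup.closure (simpleReflections Rplus))
    fun α hα ih => ?_
  obtain ⟨δ, hδ, hαδ⟩ := hΦ.exists_simpleRoot_inner_pos hα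
  have hsδ : rootReflection δ ∈ Subgroup.closure (simpleReflections Rplus) :=
    Subgroup.subset_closure ⟨δ, hδ, rfl⟩
  rcases hΦ.mem_or_mem_neg (hΦ.apply_mem (rootReflection_mem_weyl (hΦ.pos_subset hδ.1))
    (hΦ.pos_subset hα)) with h | h
  · have hlt : ⟪v, rootReflection δ α⟫ < ⟪v, α⟫ := by
      have := real_inner_self_pos.2 (hΦ.ne_zero (hΦ.pos_subset hδ.1))
      have : 0 < pairv α δ := by rw [pairv]; positivity
      rw [rootReflection_apply, inner_sub_right, real_inner_smul_right]
      nlinarith [hv δ hδ.1]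
    have hconj : rootReflection α = (rootReflection δ)⁻¹ *
        rootReflection (rootReflection δ α) * rootReflection δ := by
      rw [rootReflection_map]; group
    rw [hconj]
    exact mul_mem (mul_mem (inv_mem hsδ) (ih _ h hlt)) hsδ
  · rw [hΦ.rootReflection_eq_of_apply_mem_neg hδ hα h]
    exact hsδ

lemma exists_list_of_mem_weyl (hΦ : IsPosRootSystem R Rplus) {w : V n ≃ₗᵢ[ℝ] V n}
    (hw : w ∈ Weyl R) :
    ∃ l : List (V n ≃ₗᵢ[ℝ] V n), (∀ x ∈ l, x ∈ simpleReflections Rplus) ∧ l.prod = w := by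
  have hle : Weyl R ≤ Subgroup.closure (simpleReflections Rplus) := by
    refine (Subgroup.closure_le _).2 fun g hg => ?_
    obtain ⟨α, hα, rfl⟩ := isReflection_iff.1 hg
    rcases hΦ.mem_or_mem_neg hα with h | h
    · exact hΦ.rootReflection_mem_closure h
    · simpa [rootReflection_neg] using hΦ.rootReflection_mem_closure h
  have hw' := hle hw
  rw [← Subgroup.mem_toSubmonoid, Subgroup.closure_toSubmonoid] at hw'
  obtain ⟨l, hl, rfl⟩ := Submonoid.exists_list_of_mem_closure hw'
  refine ⟨l, fun x hx => ?_, rfl⟩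
  rcases hl x hx with h | ⟨δ, hδ, hx'⟩
  · exact h
  · exact ⟨δ, hδ, by rw [← inv_inv x, ← hx', rootReflection_inv]⟩

lemma exists_shorter_list (hΦ : IsPosRootSystem R Rplus) {l : List (V n ≃ₗᵢ[ℝ] V n)}
    (hl : ∀ x ∈ l, x ∈ simpleReflections Rplus) {δ : V n} (hδ : δ ∈ simpleRoots Rplus)
    (hneg : l.prod δ ∈ -Rplus) :
    ∃ l' : List (V n ≃ₗᵢ[ℝ] V n), (∀ x ∈ l', x ∈ simpleReflections Rplus) ∧
      l'.length < l.length ∧ l.prod * rootReflection δ = l'.prod := by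
  induction l with
  | nil => exact absurd hneg (Set.disjoint_left.1 hΦ.disjoint (by simpa using hδ.1))
  | cons x l ih =>
    obtain ⟨a, ha, rfl⟩ := hl x List.mem_cons_self
    have hl' : ∀ y ∈ l, y ∈ simpleReflections Rplus := fun y hy => hl y (List.mem_cons_of_mem _ hy)
    rcases hΦ.mem_or_mem_neg (hΦ.apply_mem (hΦ.list_prod_mem_weyl hl') (hΦ.pos_subset hδ.1))
      with h | h
    · have hs := hΦ.rootReflection_eq_of_apply_mem_neg ha h (by simpa using hneg)
      rw [rootReflection_map] at hs
      refine ⟨l, hl', by simp, ?_⟩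
      rw [List.prod_cons, ← hs]
      simp [mul_assoc]
    · obtain ⟨l', hl'', hlen, heq⟩ := ih hl' h
      refine ⟨rootReflection a :: l', ?_, by simpa using hlen, ?_⟩
      · exact fun y hy => (List.mem_cons.1 hy).elim (· ▸ ⟨a, ha, rfl⟩) (hl'' y)
      · rw [List.prod_cons, List.prod_cons, mul_assoc, heq]

lemma list_prod_apply_eq_self (hΦ : IsPosRootSystem R Rplus) (l : List (V n ≃ₗᵢ[ℝ] V n))
    (hl : ∀ x ∈ l, x ∈ simpleReflections Rplus) {x : V n} (hx : IsAntidominant Rplus x)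
    (hlx : IsAntidominant Rplus (l.prod x)) : l.prod x = x := by
  induction hlen : l.length using Nat.strong_induction_on generalizing l with
  | _ k ih =>
    rcases l.eq_nil_or_concat' with rfl | ⟨l₀, y, rfl⟩
    · simp
    obtain ⟨δ, hδ, rfl⟩ := hl y (by simp)
    have hl₀ : ∀ x ∈ l₀, x ∈ simpleReflections Rplus := fun x hx => hl x (by simp [hx])
    have hlen₀ : l₀.length < k := by simp [← hlen]
    rw [List.prod_append, List.prod_singleton] at hlx ⊢
    rcases hΦ.mem_or_mem_neg (hΦ.apply_mem (hΦ.list_prod_mem_weyl hl₀) (hΦ.pos_subset hδ.1))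
      with h | h
    · have hxδ : ⟪x, δ⟫ = 0 := by
        have h₁ := hx δ hδ.1
        have h₂ := hlx _ h
        rw [LinearIsometryEquiv.coe_mul, Function.comp_apply, LinearIsometryEquiv.inner_map_map,
          inner_rootReflection_self] at h₂
        linarith
      have hfix : rootReflection δ x = x := by simp [rootReflection_apply, pairv, hxδ]
      rw [LinearIsometryEquiv.coe_mul, Function.comp_apply, hfix] at hlx ⊢
      exact ih _ hlen₀ l₀ hl₀ hlx rfl
    · obtain ⟨l', hl', hlen', heq⟩ := hΦ.exists_shorter_list hl₀ hδ h
      rw [heq] at hlx ⊢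
      exact ih _ (hlen'.trans hlen₀) l' hl' hlx rfl

theorem apply_eq_self_of_isAntidominant (hΦ : IsPosRootSystem R Rplus) {w : V n ≃ₗᵢ[ℝ] V n}
    (hw : w ∈ Weyl R) {x : V n} (hx : IsAntidominant Rplus x) (hwx : IsAntidominant Rplus (w x)) :
    w x = x := by
  obtain ⟨l, hl, rfl⟩ := hΦ.exists_list_of_mem_weyl hw
  exact hΦ.list_prod_apply_eq_self l hl hx hwx

end IsPosRootSystem

def IsMinuscule (Rplus : Set (V n)) (ω : V n) : Prop :=
  ∀ α ∈ Rplus, pairv ω α = 0 ∨ pairv ω α = 1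

def IsLongest (R Rplus : Set (V n)) (w₀ : V n ≃ₗᵢ[ℝ] V n) : Prop :=
  w₀ ∈ Weyl R ∧ ∀ α ∈ Rplus, w₀ α ∈ -Rplus

variable {R Rplus : Set (V n)}

lemma IsMinuscule.inner_eq_zero_or_eq_nuv {ω : V n} (hω : IsMinuscule Rplus ω) {α : V n}
    (hα : α ∈ Rplus) : ⟪ω, α⟫ = 0 ∨ ⟪ω, α⟫ = nuv α := by
  rw [inner_eq_pairv_mul_nuv]
  rcases hω α hα with h | h <;> simp [h]

lemma IsMinuscule.inner_nonneg {ω : V n} (hω : IsMinuscule Rplus ω) {α : V n} (hα : α ∈ Rplus) :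
    0 ≤ ⟪ω, α⟫ := by
  rcases hω.inner_eq_zero_or_eq_nuv hα with h | h <;> simp [h, nuv_nonneg]

namespace IsLongest

variable {w₀ : V n ≃ₗᵢ[ℝ] V n}

lemma symm_apply_mem_neg (hw₀ : IsLongest R Rplus w₀) (hΦ : IsPosRootSystem R Rplus) {α : V n}
    (hα : α ∈ Rplus) : w₀.symm α ∈ -Rplus := by
  refine (hΦ.mem_or_mem_neg (hΦ.apply_mem (inv_mem hw₀.1) (hΦ.pos_subset hα))).resolve_left
    fun h => Set.disjoint_left.1 hΦ.disjoint hα ?_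
  simpa using hw₀.2 _ h

lemma inner_apply_eq_zero_or_eq_neg_nuv (hw₀ : IsLongest R Rplus w₀)
    (hΦ : IsPosRootSystem R Rplus) {ω : V n} (hω : IsMinuscule Rplus ω) {γ : V n}
    (hγ : γ ∈ Rplus) : ⟪w₀ ω, γ⟫ = 0 ∨ ⟪w₀ ω, γ⟫ = -nuv γ := by
  have hinner : ⟪w₀ ω, γ⟫ = -⟪ω, -w₀.symm γ⟫ := by
    rw [inner_neg_right, neg_neg, ← w₀.inner_map_map ω, w₀.apply_symm_apply]
  have hnuv : nuv (-w₀.symm γ) = nuv γ := by simp [nuv]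
  rcases hω.inner_eq_zero_or_eq_nuv (hw₀.symm_apply_mem_neg hΦ hγ) with h | h <;>
    simp [hinner, h, hnuv]

lemma isAntidominant_apply (hw₀ : IsLongest R Rplus w₀) (hΦ : IsPosRootSystem R Rplus)
    {ω : V n} (hω : IsMinuscule Rplus ω) : IsAntidominant Rplus (w₀ ω) := fun γ hγ => by
  rcases hw₀.inner_apply_eq_zero_or_eq_neg_nuv hΦ hω hγ with h | h
  · exact h.le
  · linarith [nuv_nonneg γ]

end IsLongest

lemma nuv_le_inner_of_inLat {c γ : V n} (hc : inLat R c) (hγ : γ ∈ R) (hpos : 0 < ⟪γ, c⟫) :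
    nuv γ ≤ ⟪γ, c⟫ := by
  obtain ⟨m, hm⟩ := hc γ hγ
  rw [hm] at hpos ⊢
  have hm1 : (1 : ℝ) ≤ m := by
    have : (0 : ℤ) < m := by exact_mod_cast pos_of_mul_pos_right hpos (nuv_nonneg γ)
    exact_mod_cast this
  nlinarith [nuv_nonneg γ]

namespace IsUb

variable {c : V n} {u : V n ≃ₗᵢ[ℝ] V n}

lemma inner_nonneg_of_apply_mem_neg (hu : IsUb R Rplus c u) {γ : V n} (hγ : u γ ∈ -Rplus) :
    0 ≤ ⟪γ, c⟫ := by
  have := hu.2.1 _ hγ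
  rw [inner_neg_right, u.inner_map_map, real_inner_comm] at this
  linarith

lemma inner_pos_of_apply_mem_neg (hu : IsUb R Rplus c u) {γ : V n} (hγ : γ ∈ Rplus)
    (hγ' : u γ ∈ -Rplus) : 0 < ⟪γ, c⟫ :=
  (hu.inner_nonneg_of_apply_mem_neg hγ').lt_of_ne (hu.2.2 γ hγ hγ').symm

lemma isAntidominant_add_apply_longest (hu : IsUb R Rplus c u) (hΦ : IsPosRootSystem R Rplus)
    (hc : inLat R c) {w₀ : V n ≃ₗᵢ[ℝ] V n} (hw₀ : IsLongest R Rplus w₀) {ω : V n}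
    (hω : IsMinuscule Rplus ω) : IsAntidominant Rplus (u c + u (w₀ ω)) := by
  intro α hα
  have hsymm : ∀ x, ⟪u x, α⟫ = ⟪x, u.symm α⟫ := fun x => by
    rw [← u.inner_map_map x, u.apply_symm_apply]
  have hmem : u.symm α ∈ R := hΦ.apply_mem (inv_mem hu.1) (hΦ.pos_subset hα)
  rw [inner_add_left, hsymm, hsymm]
  rcases hΦ.mem_or_mem_neg hmem with h | h
  · have h₁ := hu.2.1 α hα
    rw [hsymm] at h₁
    linarith [hw₀.isAntidominant_apply hΦ hω _ h]
  · obtain ⟨γ, hγ, hα'⟩ : ∃ γ ∈ Rplus, u.symm α = -γ := ⟨-u.symm α, h, by simp⟩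
    have huγ : u γ ∈ -Rplus := by
      rw [neg_eq_iff_eq_neg.1 hα'.symm, map_neg, u.apply_symm_apply]
      simpa using hα
    have h₁ := nuv_le_inner_of_inLat hc (hΦ.pos_subset hγ) (hu.inner_pos_of_apply_mem_neg hγ huγ)
    rw [hα', inner_neg_right, inner_neg_right, real_inner_comm γ c]
    rcases hw₀.inner_apply_eq_zero_or_eq_neg_nuv hΦ hω hγ with h₂ | h₂ <;>
      linarith [nuv_nonneg γ]

lemma mul (hu : IsUb R Rplus c u) (hΦ : IsPosRootSystem R Rplus) {ω : V n}
    {u' : V n ≃ₗᵢ[ℝ] V n} (hu' : IsUb R Rplus ω u') (hω : ∀ α ∈ Rplus, 0 ≤ ⟪ω, α⟫)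
    (hanti : IsAntidominant Rplus ((u * u') (ω + u'.symm c))) :
    IsUb R Rplus (ω + u'.symm c) (u * u') := by
  refine ⟨mul_mem hu.1 hu'.1, hanti, fun α hα (hneg : u (u' α) ∈ -Rplus) => ?_⟩
  have hsplit : ⟪α, ω + u'.symm c⟫ = ⟪ω, α⟫ + ⟪u' α, c⟫ := by
    rw [inner_add_right, ← u'.inner_map_map α (u'.symm c), u'.apply_symm_apply, real_inner_comm]
  have h₁ := hω α hα
  have h₂ := hu.inner_nonneg_of_apply_mem_neg hneg
  rw [hsplit]
  rcases hΦ.mem_or_mem_neg (hΦ.apply_mem hu'.1 (hΦ.pos_subset hα)) with h | h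
  · linarith [hu.inner_pos_of_apply_mem_neg h hneg]
  · linarith [hu'.inner_pos_of_apply_mem_neg hα h, real_inner_comm α ω]

end IsUb

lemma affAct_piE (u : V n ≃ₗᵢ[ℝ] V n) (a c : V n) : (piE u a).affAct c = a + u.symm c := by
  simp [ExtElem.affAct, piE, add_comm]

lemma piE_mul_piE (u u' : V n ≃ₗᵢ[ℝ] V n) (a c : V n) :
    (piE u a).mul (piE u' c) = piE (u' * u) ((piE u a).affAct c) := by
  rw [affAct_piE]
  simp only [ExtElem.mul, piE, ExtElem.mk.injEq]
  refine ⟨rfl, ?_⟩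
  simp [add_comm]

end RootSystem

theorem pi_r_step_general (n : ℕ) (R Rplus : Set (V n))
    (hfin : R.Finite) (hR : R = Rplus ∪ (-Rplus)) (hdisj : Disjoint Rplus (-Rplus))
    (h0 : (0 : V n) ∉ R)
    (hrefl : ∀ α ∈ R, ∀ β ∈ R, β - pairv β α • α ∈ R)
    (hcart : ∀ α ∈ R, ∀ β ∈ R, ∃ m : ℤ, pairv β α = m)
    (hpos : ∃ v : V n, ∀ α ∈ Rplus, 0 < ⟪v, α⟫)
    -- the minuscule weight `ω_r`, `r ∈ O'`, with `u_r` and `π_r = ω_r u_r⁻¹` of length 0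
    (ωr : V n)
    (hmin : ∀ α ∈ Rplus, pairv ωr α = 0 ∨ pairv ωr α = 1)
    (ur : V n ≃ₗᵢ[ℝ] V n) (hur : IsUb R Rplus ωr ur)
    -- the longest element `w₀` of `W`
    (w0 : V n ≃ₗᵢ[ℝ] V n) (hw0W : w0 ∈ Weyl R)
    (hw0 : ∀ α ∈ Rplus, w0 α ∈ -Rplus)
    (c : V n) (hc : inLat R c)
    (uc : V n ≃ₗᵢ[ℝ] V n) (huc : IsUb R Rplus c uc)
    (b : V n) (hbdef : b = (piE ur ωr).affAct c) :
    ∃ ub : V n ≃ₗᵢ[ℝ] V n,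
      IsUb R Rplus b ub ∧
      (piE ur ωr).mul (piE uc c) = piE ub b ∧
      (∀ z, ub z = uc (ur z)) ∧
      b = ωr + ur.symm c ∧
      ub b = uc c + uc (w0 ωr) ∧
      (∀ α ∈ Rplus, ⟪uc c + uc (w0 ωr), α⟫ ≤ 0) := by
  have hΦ : IsPosRootSystem R Rplus := ⟨hfin, hR, hdisj, h0, hrefl, hcart, hpos⟩
  have hw₀ : IsLongest R Rplus w0 := ⟨hw0W, hw0⟩
  have hω : IsMinuscule Rplus ωr := hmin
  have hb : b = ωr + ur.symm c := hbdef.trans (affAct_piE ur ωr c)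
  have hurω : ur ωr = w0 ωr := by
    simpa using (hΦ.apply_eq_self_of_isAntidominant (mul_mem hw0W (inv_mem hur.1)) hur.2.1
      (by simpa using hw₀.isAntidominant_apply hΦ hω)).symm
  have hub : (uc * ur) b = uc c + uc (w0 ωr) := by simp [hb, hurω, add_comm]
  have hanti := huc.isAntidominant_add_apply_longest hΦ hc hw₀ hω
  refine ⟨uc * ur, ?_, by rw [piE_mul_piE, ← hbdef], fun _ => rfl, hb, hub, hanti⟩
  rw [hb] at hub ⊢
  exact huc.mul hΦ hur (fun _ => hω.inner_nonneg) (hub ▸ hanti)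

/-- For any `c ∈ P` and `r ∈ O'` (so `π_r = ω_r u_r⁻¹ ∈ Π` is a nontrivial length-zero
element attached to a minuscule weight `ω_r`): `π_r π_c = π_b` for `b = π_r((c))`.
Moreover `u_b = u_c u_r`, `b = ω_r + u_r⁻¹(c)`, and `b₋ = c₋ + u_c w₀(ω_r)`; in
particular the latter weight always lies in `P₋`. -/
theorem pi_r_step (n : ℕ) (R Rplus : Set (V n))
    (hfin : R.Finite) (hR : R = Rplus ∪ (-Rplus)) (hdisj : Disjoint Rplus (-Rplus))
    (h0 : (0 : V n) ∉ R)
    (hrefl : ∀ α ∈ R, ∀ β ∈ R, β - pairv β α • α ∈ R)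
    (hcart : ∀ α ∈ R, ∀ β ∈ R, ∃ m : ℤ, pairv β α = m)
    (hpos : ∃ v : V n, ∀ α ∈ Rplus, 0 < ⟪v, α⟫)
    -- the minuscule weight `ω_r`, `r ∈ O'`, with `u_r` and `π_r = ω_r u_r⁻¹` of length 0
    (ωr : V n) (hωr_ne : ωr ≠ 0) (hωr_lat : inLat R ωr)
    (hmin : ∀ α ∈ Rplus, pairv ωr α = 0 ∨ pairv ωr α = 1)
    (ur : V n ≃ₗᵢ[ℝ] V n) (hur : IsUb R Rplus ωr ur)
    (hlen0 : lamSet R Rplus (piE ur ωr) = ∅)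
    -- the longest element `w₀` of `W`
    (w0 : V n ≃ₗᵢ[ℝ] V n) (hw0W : w0 ∈ Weyl R)
    (hw0 : ∀ α ∈ Rplus, w0 α ∈ -Rplus)
    (c : V n) (hc : inLat R c)
    (uc : V n ≃ₗᵢ[ℝ] V n) (huc : IsUb R Rplus c uc)
    (b : V n) (hbdef : b = (piE ur ωr).affAct c) :
    ∃ ub : V n ≃ₗᵢ[ℝ] V n,
      IsUb R Rplus b ub ∧
      (piE ur ωr).mul (piE uc c) = piE ub b ∧
      (∀ z, ub z = uc (ur z)) ∧
      b = ωr + ur.symm c ∧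
      ub b = uc c + uc (w0 ωr) ∧
      (∀ α ∈ Rplus, ⟪uc c + uc (w0 ωr), α⟫ ≤ 0) :=
  pi_r_step_general n R Rplus hfin hR hdisj h0 hrefl hcart hpos ωr hmin ur hur w0 hw0W hw0 c hc uc
    huc b hbdef
end

section
/- The Gauss sum identity: for every positive integer N, the sum over m from 0 to 2N−1 of exp(π i m² / (2N)) equals (1 + i)·√N. -/
/-!
Evaluate `θ(τ) = ∑ₙ exp(π i n² τ)` as `τ` approaches the cusp `1/(2N)` vertically, along
`τ = 1/(2N) + i x/(2N)²` with `x → 0⁺`, in two ways. Splitting `n` into residue classes mod `2N`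
gives `√x θ(τ) → ∑ₘ exp(π i m²/(2N))`, since each class contributes a shifted Gaussian series of
total mass `1/√x`. On the other hand, `τ ↦ -1/τ`, the period `2N` of `θ` and `τ ↦ -1/τ` again
move `τ` to `i/x - 1/(2N)`, where `θ → 1`; collecting the two automorphy factors gives
`√x θ(τ) → (-i/(2N))^(-1/2) = (1 + i)√N`.
-/

open Complex Filter Topology HurwitzZeta
open scoped Real

lemma Complex.mul_cpow_of_arg_add_mem {a b : ℂ} (ha : a ≠ 0) (hb : b ≠ 0)
    (h : a.arg + b.arg ∈ Set.Ioc (-π) π) (s : ℂ) : (a * b) ^ s = a ^ s * b ^ s := by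
  rw [cpow_def_of_ne_zero (mul_ne_zero ha hb), log_mul ha hb h, add_mul, exp_add,
    ← cpow_def_of_ne_zero ha, ← cpow_def_of_ne_zero hb]

lemma Complex.ofReal_cpow_one_half {x : ℝ} (hx : 0 ≤ x) : (x : ℂ) ^ (1 / 2 : ℂ) = √x := by
  rw [Real.sqrt_eq_rpow, ofReal_cpow hx]
  norm_num

lemma Summable.hasSum_sum_residues {α : Type*} [AddCommMonoid α] [TopologicalSpace α]
    [ContinuousAdd α] [T3Space α] {f : ℤ → α} (hf : Summable f) (c : ℕ) [NeZero c]
    {g : Fin c → α} (hg : ∀ m : Fin c, HasSum (fun k : ℤ ↦ f (k * c + (m : ℕ))) (g m)) :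
    HasSum f (∑ m, g m) := by
  let e : Fin c × ℤ ≃ ℤ := (Equiv.prodComm _ _).trans (Int.divModEquiv c).symm
  have hprod : HasSum (fun p : Fin c × ℤ ↦ f (p.2 * c + (p.1 : ℕ))) (∑' n, f n) :=
    e.hasSum_iff.2 hf.hasSum
  rw [← (hprod.prod_fiberwise hg).unique (hasSum_fintype g)]
  exact hf.hasSum

lemma HurwitzZeta.tendsto_sqrt_mul_evenKernel (a : UnitAddCircle) :
    Tendsto (fun x ↦ √x * evenKernel a x) (𝓝[>] 0) (𝓝 1) := by
  obtain ⟨p, hp, hO⟩ := isBigO_atTop_cosKernel_sub a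
  have hcos : Tendsto (cosKernel a) atTop (𝓝 1) := by
    rw [← tendsto_sub_nhds_zero_iff]
    exact hO.trans_tendsto <|
      Real.tendsto_exp_atBot.comp (tendsto_id.const_mul_atTop_of_neg (neg_neg_of_pos hp))
  refine (hcos.comp tendsto_inv_nhdsGT_zero).congr' ?_
  filter_upwards [self_mem_nhdsWithin] with x (hx : 0 < x)
  rw [evenKernel_functional_equation, ← Real.sqrt_eq_rpow, one_div, one_div, ← mul_assoc,
    mul_inv_cancel₀ (Real.sqrt_pos.2 hx).ne', one_mul]
  rfl

lemma tendsto_jacobiTheta_comap_im_atTop : Tendsto jacobiTheta (comap im atTop) (𝓝 1) := by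
  rw [← tendsto_sub_nhds_zero_iff]
  exact isBigO_at_im_infty_jacobiTheta_sub_one.trans_tendsto <|
    Real.tendsto_exp_atBot.comp (tendsto_comap.const_mul_atTop_of_neg (neg_neg_of_pos Real.pi_pos))

lemma jacobiTheta_eq_div_cpow (τ : ℂ) :
    jacobiTheta τ = jacobiTheta (-1 / τ) / (-I * τ) ^ (1 / 2 : ℂ) := by
  simp [jacobiTheta_eq_jacobiTheta₂, jacobiTheta₂_functional_equation 0 τ, div_eq_inv_mul]

lemma jacobiTheta_periodic : Function.Periodic jacobiTheta 2 := fun τ ↦ by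
  rw [add_comm, jacobiTheta_two_add]

lemma jacobiTheta_eq_div_cpow_one_sub_two_mul {τ : ℂ} (hτ : 0 < τ.im) (n : ℤ) :
    jacobiTheta τ = jacobiTheta (τ / (1 - 2 * n * τ)) / (1 - 2 * n * τ) ^ (1 / 2 : ℂ) := by
  set w : ℂ := -1 / τ + n * 2 with hw_def
  have hτ0 : τ ≠ 0 := fun h ↦ by simp [h] at hτ
  have hw : 0 < w.im := by
    rw [hw_def, add_im, neg_div, neg_im, one_div, inv_im, neg_div, neg_neg]
    simpa using div_pos hτ (normSq_pos.2 hτ0)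
  have hw0 : w ≠ 0 := fun h ↦ by simp [h] at hw
  have hprod : (-I * τ) * (-I * w) = 1 - 2 * n * τ := by
    rw [hw_def]
    field_simp
    ring_nf
    simp only [I_sq]
    ring
  have hinv : -1 / w = τ / (1 - 2 * n * τ) := by
    rw [← hprod]
    field_simp
    ring_nf
    simp only [I_sq]
    ring
  -- both factors have positive real part, so their principal square roots multiply
  have harg : (-I * τ).arg + (-I * w).arg ∈ Set.Ioc (-π) π := by
    have h1 := abs_lt.1 (abs_arg_lt_pi_div_two_iff (z := -I * τ) |>.2 (.inl (by simpa using hτ)))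
    have h2 := abs_lt.1 (abs_arg_lt_pi_div_two_iff (z := -I * w) |>.2 (.inl (by simpa using hw)))
    constructor <;> linarith
  rw [jacobiTheta_eq_div_cpow τ, show -1 / τ = w - n * 2 by ring,
    jacobiTheta_periodic.sub_int_mul_eq, jacobiTheta_eq_div_cpow w, div_div, mul_comm,
    ← mul_cpow_of_arg_add_mem (by simp [hτ0]) (by simp [hw0]) harg, hprod, hinv]

section GaussSum

variable {N : ℕ} [NeZero N]

lemma cpow_one_half_neg_I_div_two_mul :
    (-I / (2 * N)) ^ (1 / 2 : ℂ) = (1 - I) / (2 * √N) := by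
  have hN : (0 : ℝ) < N := Nat.cast_pos.2 (Nat.pos_of_neZero N)
  have hsq : (√N : ℂ) ^ 2 = N := by
    rw [← ofReal_pow, Real.sq_sqrt hN.le, ofReal_natCast]
  have h : -I / (2 * N) = ((1 - I) / (2 * √N)) ^ 2 := by
    rw [div_pow, mul_pow, hsq]
    ring_nf
    simp only [I_sq]
    ring
  rw [h, one_div, sq_cpow_two_inv]
  simp [div_re]
  positivity

lemma im_one_div_two_mul_add_pos {x : ℝ} (hx : 0 < x) :
    0 < (1 / (2 * N) + I * x / (2 * N) ^ 2 : ℂ).im := by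
  have hN : (0 : ℝ) < N := Nat.cast_pos.2 (Nat.pos_of_neZero N)
  rw [show (1 / (2 * N) + I * x / (2 * N) ^ 2 : ℂ) =
      ((1 / (2 * N) : ℝ) : ℂ) + ((x / (2 * N) ^ 2 : ℝ) : ℂ) * I by push_cast; ring]
  simp only [add_im, ofReal_im, I_im, im_ofReal_mul, mul_one, zero_add]
  positivity

lemma jacobiTheta₂_term_residue (k : ℤ) (m : ℕ) (x : ℝ) :
    jacobiTheta₂_term (k * (2 * N : ℕ) + m) 0 (1 / (2 * N) + I * x / (2 * N) ^ 2) =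
      cexp (π * I * m ^ 2 / (2 * N)) * ↑(Real.exp (-π * (k + (m / (2 * N) : ℝ)) ^ 2 * x)) := by
  have hN : (N : ℂ) ≠ 0 := NeZero.ne _
  rw [jacobiTheta₂_term, ofReal_exp, ← Complex.exp_add, show 2 * π * I * ((k * (2 * N : ℕ) + m : ℤ) : ℂ) * 0 +
        π * I * ((k * (2 * N : ℕ) + m : ℤ) : ℂ) ^ 2 * (1 / (2 * N) + I * x / (2 * N) ^ 2) =
      (π * I * m ^ 2 / (2 * N) + ((-π * (k + m / (2 * N)) ^ 2 * x : ℝ) : ℂ)) +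
        (N * k ^ 2 + k * m : ℤ) * (2 * π * I) by
    push_cast; field_simp; ring_nf; simp only [I_sq]; ring]
  rw [Complex.exp_add, exp_int_mul_two_pi_mul_I, mul_one]

lemma jacobiTheta_eq_sum_evenKernel {x : ℝ} (hx : 0 < x) :
    jacobiTheta (1 / (2 * N) + I * x / (2 * N) ^ 2) =
      ∑ m : Fin (2 * N), cexp (π * I * (m : ℕ) ^ 2 / (2 * N)) *
        evenKernel ((m : ℕ) / (2 * N) : ℝ) x := by
  have hsum := hasSum_jacobiTheta₂_term 0 (im_one_div_two_mul_add_pos (N := N) hx)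
  rw [jacobiTheta_eq_jacobiTheta₂]
  refine (hsum.summable.hasSum_sum_residues (2 * N) fun m ↦ ?_).unique hsum |>.symm
  simp only [jacobiTheta₂_term_residue]
  exact (hasSum_ofReal.2 (hasSum_int_evenKernel _ hx)).mul_left _

lemma tendsto_sqrt_mul_jacobiTheta_sum_exp :
    Tendsto (fun x : ℝ ↦ √x * jacobiTheta (1 / (2 * N) + I * x / (2 * N) ^ 2)) (𝓝[>] 0)
      (𝓝 (∑ m : Fin (2 * N), cexp (π * I * (m : ℕ) ^ 2 / (2 * N)))) := by
  have hlim := tendsto_finsetSum Finset.univ fun (m : Fin (2 * N)) _ ↦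
    ((continuous_ofReal.tendsto 1).comp
      (tendsto_sqrt_mul_evenKernel ((m : ℕ) / (2 * N) : ℝ))).const_mul
        (cexp (π * I * (m : ℕ) ^ 2 / (2 * N)))
  simp only [Function.comp_def, ofReal_one, mul_one] at hlim
  refine hlim.congr' ?_
  filter_upwards [self_mem_nhdsWithin] with x (hx : 0 < x)
  rw [jacobiTheta_eq_sum_evenKernel hx, Finset.mul_sum]
  refine Finset.sum_congr rfl fun m _ ↦ ?_
  push_cast
  ring

lemma cpow_mul_sqrt_mul_jacobiTheta {x : ℝ} (hx : 0 < x) :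
    (-I / (2 * N)) ^ (1 / 2 : ℂ) * (√x * jacobiTheta (1 / (2 * N) + I * x / (2 * N) ^ 2)) =
      jacobiTheta (I / x - 1 / (2 * N)) := by
  have hN : (N : ℂ) ≠ 0 := NeZero.ne _
  have hx0 : (x : ℂ) ≠ 0 := ofReal_ne_zero.2 hx.ne'
  have hc0 : (-I / (2 * N) : ℂ) ≠ 0 := by simp [hN]
  have hfactor : 1 - 2 * ((N : ℤ) : ℂ) * (1 / (2 * N) + I * x / (2 * N) ^ 2) =
      x * (-I / (2 * N)) := by
    push_cast
    field_simp
    ring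
  have hpoint : (1 / (2 * N) + I * x / (2 * N) ^ 2) / (x * (-I / (2 * N))) =
      I / x - 1 / (2 * N) := by
    field_simp
    ring_nf
    simp only [I_sq]
    ring
  have harg : (x : ℂ).arg + (-I / (2 * N)).arg ∈ Set.Ioc (-π) π := by
    rw [arg_ofReal_of_nonneg hx.le, zero_add]
    exact ⟨neg_pi_lt_arg _, arg_le_pi _⟩
  have hsqrt : (√x : ℂ) ≠ 0 := ofReal_ne_zero.2 (Real.sqrt_pos.2 hx).ne'
  have hc : (-I / (2 * N) : ℂ) ^ (1 / 2 : ℂ) ≠ 0 := by simp [hc0]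
  rw [jacobiTheta_eq_div_cpow_one_sub_two_mul (im_one_div_two_mul_add_pos hx) N, hfactor,
    hpoint, mul_cpow_of_arg_add_mem hx0 hc0 harg, ofReal_cpow_one_half hx.le]
  field_simp

lemma tendsto_sqrt_mul_jacobiTheta_one_add_I_mul_sqrt :
    Tendsto (fun x : ℝ ↦ √x * jacobiTheta (1 / (2 * N) + I * x / (2 * N) ^ 2)) (𝓝[>] 0)
      (𝓝 ((1 + I) * √N)) := by
  have hN : (√N : ℂ) ≠ 0 :=
    ofReal_ne_zero.2 (Real.sqrt_pos.2 (Nat.cast_pos.2 (Nat.pos_of_neZero N))).ne'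
  have h1I : (1 - I : ℂ) ≠ 0 := fun h ↦ by simpa using congrArg im h
  have hc : (1 + I) * √N = 1 / (-I / (2 * N)) ^ (1 / 2 : ℂ) := by
    rw [cpow_one_half_neg_I_div_two_mul]
    field_simp
    ring_nf
    simp only [I_sq]
    ring
  have hθ : Tendsto (fun x : ℝ ↦ jacobiTheta (I / x - 1 / (2 * N))) (𝓝[>] 0) (𝓝 1) := by
    refine tendsto_jacobiTheta_comap_im_atTop.comp (tendsto_comap_iff.2 ?_)
    refine tendsto_inv_nhdsGT_zero.congr fun x ↦ ?_
    simp [div_im]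
  rw [hc]
  refine (hθ.div_const _).congr' ?_
  filter_upwards [self_mem_nhdsWithin] with x (hx : 0 < x)
  rw [← cpow_mul_sqrt_mul_jacobiTheta hx, mul_div_cancel_left₀]
  simp [NeZero.ne N]

end GaussSum

/-- **The Gauss sum identity.** For every positive integer `N`,
`∑_{m=0}^{2N−1} exp(π i m² / (2N)) = (1 + i) √N`. -/
theorem gauss_sum (N : ℕ) (hN : 0 < N) :
    ∑ m ∈ Finset.range (2 * N),
        Complex.exp (Real.pi * Complex.I * (m : ℂ) ^ 2 / (2 * (N : ℂ))) =
      (1 + Complex.I) * (Real.sqrt N : ℂ) := by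
  have : NeZero N := ⟨hN.ne'⟩
  rw [← Fin.sum_univ_eq_sum_range (fun m ↦ cexp (π * I * (m : ℂ) ^ 2 / (2 * N)))]
  exact tendsto_nhds_unique tendsto_sqrt_mul_jacobiTheta_sum_exp
    tendsto_sqrt_mul_jacobiTheta_one_add_I_mul_sqrt
end

section
/- Let ŵ be an element of finite order in the stabilizer Ŵ_*[ξ], with ŵ² = 1, such that X_{α̃}(q^ξ) ≠ 1 for all α̃ ∈ λ(ŵ). Then μ_•(ŵ) = ∏_{[α,ν_α j] ∈ λ(ŵ)} (t_α^{−1/2} − q_α^j t_α^{1/2} X_α(q^ξ)) / (t_α^{1/2} − q_α^j t_α^{−1/2} X_α(q^ξ)) = 1. The key mechanism: since ŵ(q^ξ) = q^ξ and λ(ŵ) = −ŵ(λ(ŵ)), the factors pair off as α̃ ↔ −ŵ(α̃) with X-values inverse to each other, and each pair of factors multiplies to 1; factors with X_{α̃}(q^ξ) = −1 individually equal 1. -/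
open scoped RealInnerProductSpace Pointwise BigOperators

/-!
An involution `ŵ` with `ŵ² = 1` makes `α̃ ↦ −ŵ(α̃)` (`ExtElem.negAct`) an involution of
`λ(ŵ) = R̃₊ ∩ ŵ⁻¹(R̃₋)`. Since the affine action of `ŵ` fixes `q^ξ`, the `X`-values of `α̃`
and `−ŵ(α̃)` are inverse to each other, while `t_α` is unchanged because `ŵ` preserves lengths.
The factor `(t⁻¹ − X t)/(t − X t⁻¹)` times the same factor at `X⁻¹` is `1`, and a fixed point
has `X² = 1`, `X ≠ 1`, hence `X = −1`, where the factor is `1` by itself.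
-/

/-- The factor of `μ_•` at `[α, ν_α j]`, with `t = t_α^{1/2}` and `q_α^j` absorbed into `X`. -/
noncomputable def muFactor (t X : ℂ) : ℂ := (t⁻¹ - X * t) / (t - X * t⁻¹)

theorem muFactor_mul_muFactor_of_mul_eq_one {t X Y : ℂ} (ht : t ≠ 0) (hXY : X * Y = 1)
    (hX : X ≠ t ^ 2) (htX : t ^ 2 * X ≠ 1) : muFactor t X * muFactor t Y = 1 := by
  have hY : Y = X⁻¹ := eq_inv_of_mul_eq_one_right hXY
  have hX0 : X ≠ 0 := left_ne_zero_of_mul_eq_one hXY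
  have hden : t ^ 2 - X ≠ 0 := sub_ne_zero.mpr hX.symm
  have hden' : t ^ 2 * X - 1 ≠ 0 := sub_ne_zero.mpr htX
  subst hY
  unfold muFactor
  field_simp
  ring

theorem muFactor_of_mul_self_eq_one {t X : ℂ} (ht : t ≠ 0) (hXX : X * X = 1) (hX : X ≠ 1)
    (htX : t ^ 2 * X ≠ 1) : muFactor t X = 1 := by
  obtain rfl : X = -1 := (mul_self_eq_one_iff.mp hXX).resolve_left hX
  have hden : t + t⁻¹ ≠ 0 := by
    intro h
    apply htX
    field_simp at h
    linear_combination -h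
  unfold muFactor
  rw [neg_one_mul, neg_one_mul, sub_neg_eq_add, sub_neg_eq_add, add_comm, div_self hden]

namespace ExtElem

variable {n : ℕ} (x : ExtElem n)

noncomputable def negAct (p : V n × ℝ) : V n × ℝ := -x.act p

theorem act_neg (p : V n × ℝ) : x.act (-p) = -x.act p := by
  refine Prod.ext (map_neg x.w p.1) ?_
  simp only [act, Prod.snd_neg, Prod.fst_neg, inner_neg_left]
  ring

theorem negAct_fst_inner_self (p : V n × ℝ) :
    ⟪(x.negAct p).1, (x.negAct p).1⟫ = ⟪p.1, p.1⟫ := by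
  simp [negAct, act]

theorem inner_add_inner_negAct (ξ : V n) (p : V n × ℝ) :
    ⟪p.1, ξ⟫ + p.2 + (⟪(x.negAct p).1, ξ⟫ + (x.negAct p).2) = ⟪x.affAct ξ - ξ, x.w p.1⟫ := by
  simp only [negAct, act, affAct, Prod.fst_neg, Prod.snd_neg, inner_neg_left, inner_sub_left,
    LinearIsometryEquiv.inner_map_map, inner_add_left]
  rw [real_inner_comm ξ p.1, real_inner_comm x.b p.1, real_inner_comm ξ (x.w p.1)]
  ring

variable {x}

theorem w_w_of_mul_self (hx : x.mul x = one) (z : V n) : x.w (x.w z) = z :=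
  congrArg (fun y : ExtElem n => y.w z) hx

theorem w_b_of_mul_self (hx : x.mul x = one) : x.w x.b = -x.b := by
  have h : x.w.symm x.b = -x.b := eq_neg_of_add_eq_zero_left (congrArg ExtElem.b hx)
  calc x.w x.b = x.w (-x.w.symm x.b) := by rw [h, neg_neg]
    _ = -x.b := by rw [map_neg, LinearIsometryEquiv.apply_symm_apply]

theorem act_act_of_mul_self (hx : x.mul x = one) (p : V n × ℝ) : x.act (x.act p) = p := by
  have hb : ⟪x.w p.1, x.b⟫ = -⟪p.1, x.b⟫ := by
    rw [← neg_neg x.b, ← w_b_of_mul_self hx, inner_neg_right, LinearIsometryEquiv.inner_map_map,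
      w_b_of_mul_self hx, neg_neg]
  refine Prod.ext (w_w_of_mul_self hx p.1) ?_
  simp only [act, hb]
  ring

theorem negAct_negAct_of_mul_self (hx : x.mul x = one) (p : V n × ℝ) :
    x.negAct (x.negAct p) = p := by
  rw [negAct, negAct, act_neg, neg_neg, act_act_of_mul_self hx]

theorem negAct_mem_lamSet_of_mul_self {R Rplus : Set (V n)} (hx : x.mul x = one)
    {p : V n × ℝ} (hp : p ∈ lamSet R Rplus x) : x.negAct p ∈ lamSet R Rplus x := by
  refine ⟨hp.2, ?_⟩
  change x.act (-x.act p) ∈ -AffPlus R Rplus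
  rw [act_neg, act_act_of_mul_self hx]
  exact Set.neg_mem_neg.mpr hp.1

end ExtElem

theorem mu_bullet_involution_eq_one_general (n : ℕ) (R Rplus : Set (V n))
    (x : ExtElem n)
    (hxR : ∀ α ∈ R, x.w α ∈ R)
    (hsq : x.mul x = ExtElem.one)
    (ξ : V n) (cq : ℂ)
    -- `ŵ` stabilizes `q^ξ`
    (hfix : ∀ α ∈ R, Complex.exp (cq * ⟪x.w (ξ + x.b) - ξ, α⟫) = 1)
    -- the square roots `t_α^{1/2}`, depending only on the length of `α`
    (ts : V n → ℂ) (hts0 : ∀ α, ts α ≠ 0)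
    (htsnorm : ∀ α β : V n, ⟪α, α⟫ = ⟪β, β⟫ → ts α = ts β)
    -- the values `X_{α̃}(q^ξ)`
    (Xval : V n × ℝ → ℂ) (hXval : ∀ p, Xval p = Complex.exp (cq * (⟪p.1, ξ⟫ + p.2)))
    -- `ŵ ∈ Ŵ_*[ξ]`: `X_{α̃}(q^ξ) ≠ 1` and `t_α^{±1} X_{α̃}(q^ξ) ≠ 1` on `λ(ŵ)`
    (hstar : ∀ p ∈ lamSet R Rplus x,
      Xval p ≠ 1 ∧ Xval p ≠ ts p.1 ^ 2 ∧ ts p.1 ^ 2 * Xval p ≠ 1)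
    (hlamfin : (lamSet R Rplus x).Finite) :
    ∏ p ∈ hlamfin.toFinset,
        ((ts p.1)⁻¹ - Xval p * ts p.1) / (ts p.1 - Xval p * (ts p.1)⁻¹) = 1 := by
  have hXpair : ∀ p ∈ lamSet R Rplus x, Xval p * Xval (x.negAct p) = 1 := by
    intro p hp
    rw [hXval, hXval, ← Complex.exp_add, ← hfix _ (hxR _ hp.1.1), ← mul_add]
    congr 2
    exact_mod_cast x.inner_add_inner_negAct ξ p
  have hts : ∀ p, ts (x.negAct p).1 = ts p.1 := fun p => htsnorm _ _ (x.negAct_fst_inner_self p)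
  show ∏ p ∈ hlamfin.toFinset, muFactor (ts p.1) (Xval p) = 1
  refine Finset.prod_involution (fun p _ => x.negAct p) ?_ ?_ ?_ ?_
  · intro p hp
    rw [Set.Finite.mem_toFinset] at hp
    rw [hts]
    exact muFactor_mul_muFactor_of_mul_eq_one (hts0 _) (hXpair p hp) (hstar p hp).2.1
      (hstar p hp).2.2
  · intro p hp hne hfixed
    rw [Set.Finite.mem_toFinset] at hp
    have hXX := hXpair p hp
    rw [hfixed] at hXX
    exact hne (muFactor_of_mul_self_eq_one (hts0 _) hXX (hstar p hp).1 (hstar p hp).2.2)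
  · intro p hp
    rw [Set.Finite.mem_toFinset] at hp ⊢
    exact ExtElem.negAct_mem_lamSet_of_mul_self hsq hp
  · exact fun p _ => ExtElem.negAct_negAct_of_mul_self hsq p

/-- Let `ŵ` be an involution (`ŵ² = 1`) in the stabilizer `Ŵ_*[ξ]`, so that the
affine action of `ŵ` fixes `q^ξ` and `t_α^{±1} X_{α̃}(q^ξ) ≠ 1 ≠ X_{α̃}(q^ξ)` on
`λ(ŵ)`.  Then
`μ_•(ŵ) = ∏_{[α,ν_α j] ∈ λ(ŵ)} (t_α^{−1/2} − q_α^j t_α^{1/2} X_α(q^ξ)) /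
 (t_α^{1/2} − q_α^j t_α^{−1/2} X_α(q^ξ)) = 1`:
the factors pair off under `α̃ ↦ −ŵ(α̃)` with inverse `X`-values, each pair
multiplying to `1`, and factors with `X`-value `−1` individually equal `1`.
Here `q = exp(cq)`, `X_{[α,m]}(q^ξ) = q^{(α,ξ)+m}`, and `ts α = t_α^{1/2}`. -/
theorem mu_bullet_involution_eq_one (n : ℕ) (R Rplus : Set (V n))
    (hfin : R.Finite) (hR : R = Rplus ∪ (-Rplus)) (hdisj : Disjoint Rplus (-Rplus))
    (h0 : (0 : V n) ∉ R)
    (x : ExtElem n)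
    (hxR : ∀ α ∈ R, x.w α ∈ R)
    (hxb : inLat R x.b)
    (hsq : x.mul x = ExtElem.one)
    (ξ : V n) (cq : ℂ)
    -- `ŵ` stabilizes `q^ξ`
    (hfix : ∀ α ∈ R, Complex.exp (cq * ⟪x.w (ξ + x.b) - ξ, α⟫) = 1)
    -- the square roots `t_α^{1/2}`, depending only on the length of `α`
    (ts : V n → ℂ) (hts0 : ∀ α, ts α ≠ 0)
    (htsnorm : ∀ α β : V n, ⟪α, α⟫ = ⟪β, β⟫ → ts α = ts β)
    -- the values `X_{α̃}(q^ξ)`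
    (Xval : V n × ℝ → ℂ) (hXval : ∀ p, Xval p = Complex.exp (cq * (⟪p.1, ξ⟫ + p.2)))
    -- `ŵ ∈ Ŵ_*[ξ]`: `X_{α̃}(q^ξ) ≠ 1` and `t_α^{±1} X_{α̃}(q^ξ) ≠ 1` on `λ(ŵ)`
    (hstar : ∀ p ∈ lamSet R Rplus x,
      Xval p ≠ 1 ∧ Xval p ≠ ts p.1 ^ 2 ∧ ts p.1 ^ 2 * Xval p ≠ 1)
    (hlamfin : (lamSet R Rplus x).Finite) :
    ∏ p ∈ hlamfin.toFinset,
        ((ts p.1)⁻¹ - Xval p * ts p.1) / (ts p.1 - Xval p * (ts p.1)⁻¹) = 1 :=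
  mu_bullet_involution_eq_one_general n R Rplus x hxR hsq ξ cq hfix ts hts0 htsnorm Xval hXval hstar
    hlamfin
end
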